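/- Completeness of ctACPps+SO: for all closed ctACPps+SO process terms p and q, if p ↔ q (p and q are bisimulation equivalent) then the equation p = q is derivable from the axioms of ctACPps+SO. -/

import Mathlib

set_option autoImplicit true
set_option maxHeartbeats 1000000

/-- The three truth values of LP→⊥: true, false, both. -/
inductive V3 : Type
  | t
  | f
  | b
  deriving DecidableEq

/-- Formulas of LP→⊥ over propositional variables of type `α`. -/
inductive Fml (α : Type) : Type
  | var : α → Fml α
  | bot : Fml α
  | neg : Fml α → Fml α
  | conj : Fml α → Fml α → Fml α
  | disj : Fml α → Fml α → Fml α
  | imp : Fml α → Fml α → Fml α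

namespace Fml

/-- ⊤ abbreviates ¬⊥. -/
def top {α : Type} : Fml α := neg bot

/-- A↔B abbreviates (A→B)∧(B→A). -/
def iff' {α : Type} (A B : Fml α) : Fml α := conj (imp A B) (imp B A)

end Fml

/-- LP→⊥ truth table for negation. -/
def negT : V3 → V3
  | .f => .t
  | .t => .f
  | .b => .b

/-- LP→⊥ truth table for conjunction. -/
def conjT : V3 → V3 → V3
  | .f, _ => .f
  | _, .f => .f
  | .t, .t => .t
  | _, _ => .b

/-- LP→⊥ truth table for disjunction. -/
def disjT : V3 → V3 → V3
  | .t, _ => .t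
  | _, .t => .t
  | .f, .f => .f
  | _, _ => .b

/-- LP→⊥ truth table for implication. -/
def impT : V3 → V3 → V3
  | .f, _ => .t
  | _, y => y

/-- The LP→⊥ valuation determined by an assignment `σ` of truth values to variables. -/
def eval {α : Type} (σ : α → V3) : Fml α → V3
  | .var x => σ x
  | .bot => .f
  | .neg A => negT (eval σ A)
  | .conj A B => conjT (eval σ A) (eval σ B)
  | .disj A B => disjT (eval σ A) (eval σ B)
  | .imp A B => impT (eval σ A) (eval σ B)

/-- Logical equivalence in LP→⊥: the same value under every valuation. -/
def FEquiv {α : Type} (A B : Fml α) : Prop := ∀ σ : α → V3, eval σ A = eval σ B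

/-- `φ ∈ [⊥]`: `φ` is logically equivalent to ⊥. -/
def EqBot {α : Type} (φ : Fml α) : Prop := ∀ σ : α → V3, eval σ φ = V3.f

/-- Semantic consequence in LP→⊥ (designated values t and b). -/
def SemCons {α : Type} (Γ : Set (Fml α)) (A : Fml α) : Prop :=
  ∀ σ : α → V3, (∀ C ∈ Γ, eval σ C ≠ V3.f) → eval σ A ≠ V3.f

/-- The Hilbert system of LP→⊥, with hypotheses `Γ`. -/
inductive Hilb {α : Type} (Γ : Set (Fml α)) : Fml α → Prop
  | hyp {A : Fml α} : A ∈ Γ → Hilb Γ A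
  | mp {A B : Fml α} : Hilb Γ (A.imp B) → Hilb Γ A → Hilb Γ B
  | ax1 (A B : Fml α) : Hilb Γ (A.imp (B.imp A))
  | ax2 (A B C : Fml α) : Hilb Γ ((A.imp (B.imp C)).imp ((A.imp B).imp (A.imp C)))
  | ax3 (A B : Fml α) : Hilb Γ (((A.imp B).imp A).imp A)
  | ax4 (A : Fml α) : Hilb Γ (Fml.bot.imp A)
  | ax5 (A B : Fml α) : Hilb Γ ((A.conj B).imp A)
  | ax6 (A B : Fml α) : Hilb Γ ((A.conj B).imp B)
  | ax7 (A B : Fml α) : Hilb Γ (A.imp (B.imp (A.conj B)))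
  | ax8 (A B : Fml α) : Hilb Γ (A.imp (A.disj B))
  | ax9 (A B : Fml α) : Hilb Γ (B.imp (A.disj B))
  | ax10 (A B C : Fml α) : Hilb Γ ((A.imp C).imp ((B.imp C).imp ((A.disj B).imp C)))
  | ax11 (A : Fml α) : Hilb Γ (Fml.iff' A.neg.neg A)
  | ax12 (A B : Fml α) : Hilb Γ (Fml.iff' (A.imp B).neg (A.conj B.neg))
  | ax13 (A B : Fml α) : Hilb Γ (Fml.iff' (A.conj B).neg (A.neg.disj B.neg))
  | ax14 (A B : Fml α) : Hilb Γ (Fml.iff' (A.disj B).neg (A.neg.conj B.neg))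
  | ax15 (A : Fml α) : Hilb Γ (A.disj A.neg)

/-- The internalization (A↔B)∧(¬A↔¬B) of logical equivalence. -/
def InternEq {α : Type} (φ ψ : Fml α) : Fml α :=
  (Fml.iff' φ ψ).conj (Fml.iff' φ.neg ψ.neg)

/-- Derivable equality of propositions: the least congruence containing the
instances of axiom IMP (φ = ψ whenever ⊢ (φ↔ψ)∧(¬φ↔¬ψ)). -/
inductive PropEq {α : Type} : Fml α → Fml α → Prop
  | imp {φ ψ} : Hilb (∅ : Set (Fml α)) (InternEq φ ψ) → PropEq φ ψ
  | refl (φ) : PropEq φ φ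
  | symm {φ ψ} : PropEq φ ψ → PropEq ψ φ
  | trans {φ ψ χ} : PropEq φ ψ → PropEq ψ χ → PropEq φ χ
  | negC {φ ψ} : PropEq φ ψ → PropEq φ.neg ψ.neg
  | conjC {φ ψ φ' ψ'} : PropEq φ ψ → PropEq φ' ψ' → PropEq (φ.conj φ') (ψ.conj ψ')
  | disjC {φ ψ φ' ψ'} : PropEq φ ψ → PropEq φ' ψ' → PropEq (φ.disj φ') (ψ.disj ψ')
  | impC {φ ψ φ' ψ'} : PropEq φ ψ → PropEq φ' ψ' → PropEq (φ.imp φ') (ψ.imp ψ')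

/-- Closed ctACPps process terms (δ is `delta`, ⊗ is `nex`, `gc`/`se` are the
guarded command and signal emission, `par` is ∥, `lm` is left merge ⌊⌊,
`cm` is communication merge |, `encap H` is ∂_H). -/
inductive SPT (α Act S : Type) : Type
  | act : Act → SPT α Act S
  | delta : SPT α Act S
  | nex : SPT α Act S
  | alt : SPT α Act S → SPT α Act S → SPT α Act S
  | seq : SPT α Act S → SPT α Act S → SPT α Act S
  | gc : Fml α → SPT α Act S → SPT α Act S
  | se : Fml α → SPT α Act S → SPT α Act S
  | par : SPT α Act S → SPT α Act S → SPT α Act S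
  | lm : SPT α Act S → SPT α Act S → SPT α Act S
  | cm : SPT α Act S → SPT α Act S → SPT α Act S
  | encap : Set Act → SPT α Act S → SPT α Act S
  | st : S → SPT α Act S → SPT α Act S

/-- The constant corresponding to an element of A ∪ {δ} (encoded as `Option Act`,
with `none` standing for δ). -/
def actd {α Act S : Type} : Option Act → SPT α Act S
  | some a => .act a
  | none => .delta

section
variable {α Act S : Type}

/-- Derivable equality from the axioms of ctACPps (γ is the communication
function on A ∪ {δ}; `a | b` in the axioms stands for γ(a,b), which is the
content of axiom `CF`): the least congruence satisfying A1-A7, NE1-NE3,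
GC1-GC7, SE1-SE8, IMP, CM1-CM9 (with CM2S, CM3S), C1-C3, D1-D4,
GC8S-GC11 and SE9-SE12. -/
inductive SDeriv (γ : Option Act → Option Act → Option Act)
    (actF : Option Act → S → Option Act) (effF : Option Act → S → S)
    (sigF : S → Fml α) :
    SPT α Act S → SPT α Act S → Prop
  | refl (p : SPT α Act S) : SDeriv γ actF effF sigF p p
  | symm {p q} : SDeriv γ actF effF sigF p q → SDeriv γ actF effF sigF q p
  | trans {p q r} : SDeriv γ actF effF sigF p q → SDeriv γ actF effF sigF q r → SDeriv γ actF effF sigF p r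
  | altC {p q p' q'} : SDeriv γ actF effF sigF p q → SDeriv γ actF effF sigF p' q' → SDeriv γ actF effF sigF (.alt p p') (.alt q q')
  | seqC {p q p' q'} : SDeriv γ actF effF sigF p q → SDeriv γ actF effF sigF p' q' → SDeriv γ actF effF sigF (.seq p p') (.seq q q')
  | gcC {φ ψ p q} : PropEq φ ψ → SDeriv γ actF effF sigF p q → SDeriv γ actF effF sigF (.gc φ p) (.gc ψ q)
  | seC {φ ψ p q} : PropEq φ ψ → SDeriv γ actF effF sigF p q → SDeriv γ actF effF sigF (.se φ p) (.se ψ q)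
  | parC {p q p' q'} : SDeriv γ actF effF sigF p q → SDeriv γ actF effF sigF p' q' → SDeriv γ actF effF sigF (.par p p') (.par q q')
  | lmC {p q p' q'} : SDeriv γ actF effF sigF p q → SDeriv γ actF effF sigF p' q' → SDeriv γ actF effF sigF (.lm p p') (.lm q q')
  | cmC {p q p' q'} : SDeriv γ actF effF sigF p q → SDeriv γ actF effF sigF p' q' → SDeriv γ actF effF sigF (.cm p p') (.cm q q')
  | encapC (H : Set Act) {p q} : SDeriv γ actF effF sigF p q → SDeriv γ actF effF sigF (.encap H p) (.encap H q)
  | stC (s : S) {p q} : SDeriv γ actF effF sigF p q →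
      SDeriv γ actF effF sigF (.st s p) (.st s q)
  | A1 (x y : SPT α Act S) : SDeriv γ actF effF sigF (.alt x y) (.alt y x)
  | A2 (x y z : SPT α Act S) : SDeriv γ actF effF sigF (.alt (.alt x y) z) (.alt x (.alt y z))
  | A3 (x : SPT α Act S) : SDeriv γ actF effF sigF (.alt x x) x
  | A4 (x y z : SPT α Act S) : SDeriv γ actF effF sigF (.seq (.alt x y) z) (.alt (.seq x z) (.seq y z))
  | A5 (x y z : SPT α Act S) : SDeriv γ actF effF sigF (.seq (.seq x y) z) (.seq x (.seq y z))
  | A6 (x : SPT α Act S) : SDeriv γ actF effF sigF (.alt x .delta) x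
  | A7 (x : SPT α Act S) : SDeriv γ actF effF sigF (.seq .delta x) .delta
  | NE1 (x : SPT α Act S) : SDeriv γ actF effF sigF (.alt x .nex) .nex
  | NE2 (x : SPT α Act S) : SDeriv γ actF effF sigF (.seq .nex x) .nex
  | NE3 (a : Option Act) : SDeriv γ actF effF sigF (.seq (actd a) .nex) (.delta : SPT α Act S)
  | GC1 (x : SPT α Act S) : SDeriv γ actF effF sigF (.gc Fml.top x) x
  | GC2 (x : SPT α Act S) : SDeriv γ actF effF sigF (.gc .bot x) .delta
  | GC3 (φ : Fml α) : SDeriv γ actF effF sigF (.gc φ .delta) (.delta : SPT α Act S)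
  | GC4 (φ : Fml α) (x y : SPT α Act S) :
      SDeriv γ actF effF sigF (.gc φ (.alt x y)) (.alt (.gc φ x) (.gc φ y))
  | GC5 (φ : Fml α) (x y : SPT α Act S) : SDeriv γ actF effF sigF (.gc φ (.seq x y)) (.seq (.gc φ x) y)
  | GC6 (φ ψ : Fml α) (x : SPT α Act S) : SDeriv γ actF effF sigF (.gc φ (.gc ψ x)) (.gc (φ.conj ψ) x)
  | GC7 (φ ψ : Fml α) (x : SPT α Act S) :
      SDeriv γ actF effF sigF (.gc (φ.disj ψ) x) (.alt (.gc φ x) (.gc ψ x))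
  | SE1 (x : SPT α Act S) : SDeriv γ actF effF sigF (.se Fml.top x) x
  | SE2 (x : SPT α Act S) : SDeriv γ actF effF sigF (.se .bot x) .nex
  | SE3 (φ : Fml α) : SDeriv γ actF effF sigF (.se φ .nex) (.nex : SPT α Act S)
  | SE4 (φ : Fml α) (x y : SPT α Act S) : SDeriv γ actF effF sigF (.alt (.se φ x) y) (.se φ (.alt x y))
  | SE5 (φ : Fml α) (x y : SPT α Act S) : SDeriv γ actF effF sigF (.seq (.se φ x) y) (.se φ (.seq x y))
  | SE6 (φ ψ : Fml α) (x : SPT α Act S) : SDeriv γ actF effF sigF (.se φ (.se ψ x)) (.se (φ.conj ψ) x)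
  | SE7 (φ : Fml α) (x : SPT α Act S) : SDeriv γ actF effF sigF (.se φ (.gc φ x)) (.se φ x)
  | SE8 (φ ψ : Fml α) (x : SPT α Act S) :
      SDeriv γ actF effF sigF (.gc φ (.se ψ x)) (.se (φ.imp ψ) (.gc φ x))
  | CM1 (x y : SPT α Act S) :
      SDeriv γ actF effF sigF (.par x y) (.alt (.alt (.lm x y) (.lm y x)) (.cm x y))
  | CM2S (a : Option Act) (x : SPT α Act S) :
      SDeriv γ actF effF sigF (.lm (actd a) x) (.alt (.seq (actd a) x) (.encap Set.univ x))
  | CM3S (a : Option Act) (x y : SPT α Act S) :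
      SDeriv γ actF effF sigF (.lm (.seq (actd a) x) y)
        (.alt (.seq (actd a) (.par x y)) (.encap Set.univ y))
  | CM4 (x y z : SPT α Act S) : SDeriv γ actF effF sigF (.lm (.alt x y) z) (.alt (.lm x z) (.lm y z))
  | CM5 (a b : Option Act) (x : SPT α Act S) :
      SDeriv γ actF effF sigF (.cm (.seq (actd a) x) (actd b)) (.seq (actd (γ a b)) x)
  | CM6 (a b : Option Act) (x : SPT α Act S) :
      SDeriv γ actF effF sigF (.cm (actd a) (.seq (actd b) x)) (.seq (actd (γ a b)) x)
  | CM7 (a b : Option Act) (x y : SPT α Act S) :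
      SDeriv γ actF effF sigF (.cm (.seq (actd a) x) (.seq (actd b) y)) (.seq (actd (γ a b)) (.par x y))
  | CM8 (x y z : SPT α Act S) : SDeriv γ actF effF sigF (.cm (.alt x y) z) (.alt (.cm x z) (.cm y z))
  | CM9 (x y z : SPT α Act S) : SDeriv γ actF effF sigF (.cm x (.alt y z)) (.alt (.cm x y) (.cm x z))
  | CF (a b : Option Act) : SDeriv γ actF effF sigF (.cm (actd a) (actd b)) (actd (γ a b) : SPT α Act S)
  | C1 (a b : Option Act) :
      SDeriv γ actF effF sigF (.cm (actd a) (actd b)) (.cm (actd b) (actd a) : SPT α Act S)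
  | C2 (a b c : Option Act) :
      SDeriv γ actF effF sigF (.cm (.cm (actd a) (actd b)) (actd c))
        (.cm (actd a) (.cm (actd b) (actd c)) : SPT α Act S)
  | C3 (a : Option Act) : SDeriv γ actF effF sigF (.cm .delta (actd a)) (.delta : SPT α Act S)
  | D1 (H : Set Act) (a : Act) : a ∉ H → SDeriv γ actF effF sigF (.encap H (.act a)) (.act a)
  | D1d (H : Set Act) : SDeriv γ actF effF sigF (.encap H (.delta : SPT α Act S)) .delta
  | D2 (H : Set Act) (a : Act) : a ∈ H → SDeriv γ actF effF sigF (.encap H (.act a)) .delta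
  | D3 (H : Set Act) (x y : SPT α Act S) :
      SDeriv γ actF effF sigF (.encap H (.alt x y)) (.alt (.encap H x) (.encap H y))
  | D4 (H : Set Act) (x y : SPT α Act S) :
      SDeriv γ actF effF sigF (.encap H (.seq x y)) (.seq (.encap H x) (.encap H y))
  | GC8S (φ : Fml α) (x y : SPT α Act S) :
      SDeriv γ actF effF sigF (.lm (.gc φ x) y) (.alt (.gc φ (.lm x y)) (.encap Set.univ y))
  | GC9S (φ : Fml α) (x y : SPT α Act S) :
      SDeriv γ actF effF sigF (.cm (.gc φ x) y) (.alt (.gc φ (.cm x y)) (.encap Set.univ y))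
  | GC10S (φ : Fml α) (x y : SPT α Act S) :
      SDeriv γ actF effF sigF (.cm x (.gc φ y)) (.alt (.gc φ (.cm x y)) (.encap Set.univ x))
  | GC11 (H : Set Act) (φ : Fml α) (x : SPT α Act S) :
      SDeriv γ actF effF sigF (.encap H (.gc φ x)) (.gc φ (.encap H x))
  | SE9 (φ : Fml α) (x y : SPT α Act S) : SDeriv γ actF effF sigF (.lm (.se φ x) y) (.se φ (.lm x y))
  | SE10 (φ : Fml α) (x y : SPT α Act S) : SDeriv γ actF effF sigF (.cm (.se φ x) y) (.se φ (.cm x y))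
  | SE11 (φ : Fml α) (x y : SPT α Act S) : SDeriv γ actF effF sigF (.cm x (.se φ y)) (.se φ (.cm x y))
  | SE12 (H : Set Act) (φ : Fml α) (x : SPT α Act S) :
      SDeriv γ actF effF sigF (.encap H (.se φ x)) (.se φ (.encap H x))
  | SO1 (a : Option Act) (s : S) :
      SDeriv γ actF effF sigF (.st s (actd a)) (.se (sigF s) (actd (actF a s)))
  | SO2 (a : Option Act) (s : S) (x : SPT α Act S) :
      SDeriv γ actF effF sigF (.st s (.seq (actd a) x))
        (.se (sigF s) (.seq (actd (actF a s)) (.st (effF a s) x)))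
  | SO3 (s : S) (x y : SPT α Act S) :
      SDeriv γ actF effF sigF (.st s (.alt x y)) (.alt (.st s x) (.st s y))
  | SO4 (s : S) (φ : Fml α) (x : SPT α Act S) :
      SDeriv γ actF effF sigF (.st s (.gc φ x)) (.se (sigF s) (.gc φ (.st s x)))
  | SO5 (s : S) (φ : Fml α) (x : SPT α Act S) :
      SDeriv γ actF effF sigF (.st s (.se φ x)) (.se φ (.st s x))

/-- Basic terms (basic terms of ctBPAps, within the ctACPps syntax). -/
inductive SBasic : SPT α Act S → Prop
  | nex : SBasic (.nex : SPT α Act S)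
  | emiDelta {φ : Fml α} : ¬ EqBot φ → SBasic (.se φ .delta)
  | gcAct {φ : Fml α} (a : Act) : ¬ EqBot φ → SBasic (.gc φ (.act a))
  | gcSeq {φ : Fml α} (a : Act) {p : SPT α Act S} :
      ¬ EqBot φ → SBasic p → SBasic (.gc φ (.seq (.act a) p))
  | alt {p q : SPT α Act S} : SBasic p → SBasic q → SBasic (.alt p q)

/-- The signal (root signal) emitted by a process term. -/
def sigS (sigF : S → Fml α) : SPT α Act S → Fml α
  | .act _ => Fml.top
  | .delta => Fml.top
  | .nex => .bot
  | .alt p q => (sigS sigF p).conj (sigS sigF q)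
  | .seq p _ => sigS sigF p
  | .gc φ p => φ.imp (sigS sigF p)
  | .se φ p => φ.conj (sigS sigF p)
  | .par p q => (sigS sigF p).conj (sigS sigF q)
  | .lm p q => (sigS sigF p).conj (sigS sigF q)
  | .cm p q => (sigS sigF p).conj (sigS sigF q)
  | .encap _ p => sigS sigF p
  | .st s p => (sigS sigF p).conj (sigF s)

/-- The structural operational semantics of ctACPps: `STr γ actF effF sigF p φ a (some q)` is the
action step p –φ,a→ q and `STr γ actF effF sigF p φ a none` is the action termination p –φ,a→ √. -/
inductive STr (γ : Option Act → Option Act → Option Act)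
    (actF : Option Act → S → Option Act) (effF : Option Act → S → S)
    (sigF : S → Fml α) :
    SPT α Act S → Fml α → Act → Option (SPT α Act S) → Prop
  | act (a : Act) : STr γ actF effF sigF (.act a) Fml.top a none
  | altL {x φ a o} (y : SPT α Act S) :
      STr γ actF effF sigF x φ a o → ¬ EqBot (sigS sigF (SPT.alt x y)) → STr γ actF effF sigF (.alt x y) φ a o
  | altR {y φ a o} (x : SPT α Act S) :
      STr γ actF effF sigF y φ a o → ¬ EqBot (sigS sigF (SPT.alt x y)) → STr γ actF effF sigF (.alt x y) φ a o
  | seqT {x φ a} (y : SPT α Act S) :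
      STr γ actF effF sigF x φ a none → ¬ EqBot (sigS sigF y) → STr γ actF effF sigF (.seq x y) φ a (some y)
  | seqS {x φ a x'} (y : SPT α Act S) :
      STr γ actF effF sigF x φ a (some x') → STr γ actF effF sigF (.seq x y) φ a (some (.seq x' y))
  | gcR {x φ a o} (ψ : Fml α) :
      STr γ actF effF sigF x φ a o → ¬ EqBot (φ.conj ψ) → STr γ actF effF sigF (.gc ψ x) (φ.conj ψ) a o
  | seR {x φ a o} (ψ : Fml α) :
      STr γ actF effF sigF x φ a o → ¬ EqBot (sigS sigF (SPT.se ψ x)) → STr γ actF effF sigF (.se ψ x) φ a o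
  | parTL {x φ a} (y : SPT α Act S) :
      STr γ actF effF sigF x φ a none → ¬ EqBot (sigS sigF (SPT.par x y)) → ¬ EqBot (sigS sigF y) →
      STr γ actF effF sigF (.par x y) φ a (some y)
  | parTR (x : SPT α Act S) {y φ a} :
      STr γ actF effF sigF y φ a none → ¬ EqBot (sigS sigF (SPT.par x y)) → ¬ EqBot (sigS sigF x) →
      STr γ actF effF sigF (.par x y) φ a (some x)
  | parSL {x φ a x'} (y : SPT α Act S) :
      STr γ actF effF sigF x φ a (some x') → ¬ EqBot (sigS sigF (SPT.par x y)) →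
      ¬ EqBot (sigS sigF (SPT.par x' y)) → STr γ actF effF sigF (.par x y) φ a (some (.par x' y))
  | parSR (x : SPT α Act S) {y φ a y'} :
      STr γ actF effF sigF y φ a (some y') → ¬ EqBot (sigS sigF (SPT.par x y)) →
      ¬ EqBot (sigS sigF (SPT.par x y')) → STr γ actF effF sigF (.par x y) φ a (some (.par x y'))
  | parCTT {x y : SPT α Act S} {φ ψ a b c} :
      STr γ actF effF sigF x φ a none → STr γ actF effF sigF y ψ b none → γ (some a) (some b) = some c →
      ¬ EqBot (φ.conj ψ) → ¬ EqBot (sigS sigF (SPT.par x y)) →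
      STr γ actF effF sigF (.par x y) (φ.conj ψ) c none
  | parCTS {x y : SPT α Act S} {φ ψ a b c y'} :
      STr γ actF effF sigF x φ a none → STr γ actF effF sigF y ψ b (some y') → γ (some a) (some b) = some c →
      ¬ EqBot (φ.conj ψ) → ¬ EqBot (sigS sigF (SPT.par x y)) →
      STr γ actF effF sigF (.par x y) (φ.conj ψ) c (some y')
  | parCST {x y : SPT α Act S} {φ ψ a b c x'} :
      STr γ actF effF sigF x φ a (some x') → STr γ actF effF sigF y ψ b none → γ (some a) (some b) = some c →
      ¬ EqBot (φ.conj ψ) → ¬ EqBot (sigS sigF (SPT.par x y)) →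
      STr γ actF effF sigF (.par x y) (φ.conj ψ) c (some x')
  | parCSS {x y : SPT α Act S} {φ ψ a b c x' y'} :
      STr γ actF effF sigF x φ a (some x') → STr γ actF effF sigF y ψ b (some y') → γ (some a) (some b) = some c →
      ¬ EqBot (φ.conj ψ) → ¬ EqBot (sigS sigF (SPT.par x y)) →
      ¬ EqBot (sigS sigF (SPT.par x' y')) →
      STr γ actF effF sigF (.par x y) (φ.conj ψ) c (some (.par x' y'))
  | lmT {x φ a} (y : SPT α Act S) :
      STr γ actF effF sigF x φ a none → ¬ EqBot (sigS sigF (SPT.lm x y)) → ¬ EqBot (sigS sigF y) →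
      STr γ actF effF sigF (.lm x y) φ a (some y)
  | lmS {x φ a x'} (y : SPT α Act S) :
      STr γ actF effF sigF x φ a (some x') → ¬ EqBot (sigS sigF (SPT.lm x y)) →
      ¬ EqBot (sigS sigF (SPT.par x' y)) → STr γ actF effF sigF (.lm x y) φ a (some (.par x' y))
  | cmTT {x y : SPT α Act S} {φ ψ a b c} :
      STr γ actF effF sigF x φ a none → STr γ actF effF sigF y ψ b none → γ (some a) (some b) = some c →
      ¬ EqBot (φ.conj ψ) → ¬ EqBot (sigS sigF (SPT.cm x y)) →
      STr γ actF effF sigF (.cm x y) (φ.conj ψ) c none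
  | cmTS {x y : SPT α Act S} {φ ψ a b c y'} :
      STr γ actF effF sigF x φ a none → STr γ actF effF sigF y ψ b (some y') → γ (some a) (some b) = some c →
      ¬ EqBot (φ.conj ψ) → ¬ EqBot (sigS sigF (SPT.cm x y)) →
      STr γ actF effF sigF (.cm x y) (φ.conj ψ) c (some y')
  | cmST {x y : SPT α Act S} {φ ψ a b c x'} :
      STr γ actF effF sigF x φ a (some x') → STr γ actF effF sigF y ψ b none → γ (some a) (some b) = some c →
      ¬ EqBot (φ.conj ψ) → ¬ EqBot (sigS sigF (SPT.cm x y)) →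
      STr γ actF effF sigF (.cm x y) (φ.conj ψ) c (some x')
  | cmSS {x y : SPT α Act S} {φ ψ a b c x' y'} :
      STr γ actF effF sigF x φ a (some x') → STr γ actF effF sigF y ψ b (some y') → γ (some a) (some b) = some c →
      ¬ EqBot (φ.conj ψ) → ¬ EqBot (sigS sigF (SPT.cm x y)) →
      ¬ EqBot (sigS sigF (SPT.par x' y')) →
      STr γ actF effF sigF (.cm x y) (φ.conj ψ) c (some (.par x' y'))
  | encapR {x φ a o} (H : Set Act) :
      STr γ actF effF sigF x φ a o → a ∉ H →
      STr γ actF effF sigF (.encap H x) φ a (Option.map (SPT.encap H) o)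
  | stT {x φ a a'} (s : S) :
      STr γ actF effF sigF x φ a none → actF (some a) s = some a' →
      ¬ EqBot (sigS sigF (SPT.st s x)) →
      STr γ actF effF sigF (.st s x) φ a' none
  | stS {x φ a a' x'} (s : S) :
      STr γ actF effF sigF x φ a (some x') → actF (some a) s = some a' →
      ¬ EqBot (sigS sigF (SPT.st s x)) →
      ¬ EqBot (sigS sigF (SPT.st (effF (some a) s) x')) →
      STr γ actF effF sigF (.st s x) φ a' (some (.st (effF (some a) s) x'))

/-- Lift a relation on process terms to their optional (√-extended) targets. -/
def SOptR (R : SPT α Act S → SPT α Act S → Prop) :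
    Option (SPT α Act S) → Option (SPT α Act S) → Prop
  | none, none => True
  | some p, some q => R p q
  | _, _ => False

/-- The (one-directional) simulation conditions of a splitting bisimulation. -/
def SSim (γ : Option Act → Option Act → Option Act)
    (actF : Option Act → S → Option Act) (effF : Option Act → S → S)
    (sigF : S → Fml α)
    (R : SPT α Act S → SPT α Act S → Prop) (p q : SPT α Act S) : Prop :=
  (∀ φ a o, STr γ actF effF sigF p φ a o →
    ∀ σ : α → V3, eval σ (sigS sigF p) ≠ V3.f → eval σ φ ≠ V3.f →
      ∃ ψ o', eval σ ψ = eval σ φ ∧ STr γ actF effF sigF q ψ a o' ∧ SOptR R o o') ∧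
  FEquiv (sigS sigF p) (sigS sigF q)

/-- `R` is a bisimulation. -/
def SIsBisim (γ : Option Act → Option Act → Option Act)
    (actF : Option Act → S → Option Act) (effF : Option Act → S → S)
    (sigF : S → Fml α)
    (R : SPT α Act S → SPT α Act S → Prop) : Prop :=
  ∀ p q, R p q → SSim γ actF effF sigF R p q ∧
    SSim γ actF effF sigF (fun u v => R v u) q p

/-- Bisimulation equivalence. -/
def SBisim (γ : Option Act → Option Act → Option Act)
    (actF : Option Act → S → Option Act) (effF : Option Act → S → S)
    (sigF : S → Fml α) (p q : SPT α Act S) : Prop :=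
  ∃ R, SIsBisim γ actF effF sigF R ∧ R p q

end

/-!
Every closed term `p` is derivably equal to its head normal form `s(p) ⌃ Σ φ :→ a · p'`, with
one summand per transition `p –φ,a→ p'` (and `φ :→ a` per termination); this is proved by
induction on the size of `p`, simultaneously with the commutativity of `∥`. Using GC7 and the
completeness of the Hilbert calculus of LP→⊥ (Kalmár's argument), the guard of each summand is
then split into a sum over all valuations `σ` of guards `χ_σ ∧ s(p) ∧ φ`, which take the value
`ν(s(p) ∧ φ)` at `σ` and `f` everywhere else. If `p ↔ q`, each such summand of `p` is either `δ`
(its guard is `≡ ⊥`) or, by the transfer condition at `σ`, matched by a summand of `q` with an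
equivalent guard and a bisimilar target; so by induction on the sizes the two sums are derivably
equal, and `s(p) ≡ s(q)` finishes the proof.
-/

/-! ### Completeness of the Hilbert calculus of LP→⊥ -/

namespace Hilb

variable {α : Type} {Γ : Set (Fml α)}

theorem mono {Γ' : Set (Fml α)} (hs : Γ ⊆ Γ') {A : Fml α} (h : Hilb Γ A) : Hilb Γ' A := by
  induction h with
  | hyp h => exact .hyp (hs h)
  | mp _ _ ih₁ ih₂ => exact .mp ih₁ ih₂
  | ax1 => exact .ax1 ..
  | ax2 => exact .ax2 ..
  | ax3 => exact .ax3 ..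
  | ax4 => exact .ax4 ..
  | ax5 => exact .ax5 ..
  | ax6 => exact .ax6 ..
  | ax7 => exact .ax7 ..
  | ax8 => exact .ax8 ..
  | ax9 => exact .ax9 ..
  | ax10 => exact .ax10 ..
  | ax11 => exact .ax11 ..
  | ax12 => exact .ax12 ..
  | ax13 => exact .ax13 ..
  | ax14 => exact .ax14 ..
  | ax15 => exact .ax15 ..

theorem weaken (A : Fml α) {B : Fml α} (h : Hilb Γ B) : Hilb (insert A Γ) B :=
  h.mono (Set.subset_insert _ _)

theorem assumption (A : Fml α) : Hilb (insert A Γ) A :=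
  .hyp (Set.mem_insert _ _)

theorem imp_self (A : Fml α) : Hilb Γ (A.imp A) :=
  .mp (.mp (.ax2 A (A.imp A) A) (.ax1 A (A.imp A))) (.ax1 A A)

theorem deduction {A B : Fml α} (h : Hilb (insert A Γ) B) : Hilb Γ (A.imp B) := by
  induction h with
  | hyp h =>
    rcases h with rfl | h
    · exact imp_self _
    · exact .mp (.ax1 _ _) (.hyp h)
  | mp _ _ ih₁ ih₂ => exact .mp (.mp (.ax2 _ _ _) ih₁) ih₂
  | ax1 => exact .mp (.ax1 _ _) (.ax1 ..)
  | ax2 => exact .mp (.ax1 _ _) (.ax2 ..)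
  | ax3 => exact .mp (.ax1 _ _) (.ax3 ..)
  | ax4 => exact .mp (.ax1 _ _) (.ax4 ..)
  | ax5 => exact .mp (.ax1 _ _) (.ax5 ..)
  | ax6 => exact .mp (.ax1 _ _) (.ax6 ..)
  | ax7 => exact .mp (.ax1 _ _) (.ax7 ..)
  | ax8 => exact .mp (.ax1 _ _) (.ax8 ..)
  | ax9 => exact .mp (.ax1 _ _) (.ax9 ..)
  | ax10 => exact .mp (.ax1 _ _) (.ax10 ..)
  | ax11 => exact .mp (.ax1 _ _) (.ax11 ..)
  | ax12 => exact .mp (.ax1 _ _) (.ax12 ..)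
  | ax13 => exact .mp (.ax1 _ _) (.ax13 ..)
  | ax14 => exact .mp (.ax1 _ _) (.ax14 ..)
  | ax15 => exact .mp (.ax1 _ _) (.ax15 ..)

variable {A B C : Fml α}

theorem imp_trans (h₁ : Hilb Γ (A.imp B)) (h₂ : Hilb Γ (B.imp C)) : Hilb Γ (A.imp C) :=
  deduction (.mp (h₂.weaken _) (.mp (h₁.weaken _) (assumption _)))

theorem conj_intro (h₁ : Hilb Γ A) (h₂ : Hilb Γ B) : Hilb Γ (A.conj B) :=
  .mp (.mp (.ax7 A B) h₁) h₂

theorem conj_left (h : Hilb Γ (A.conj B)) : Hilb Γ A := .mp (.ax5 A B) h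

theorem conj_right (h : Hilb Γ (A.conj B)) : Hilb Γ B := .mp (.ax6 A B) h

theorem disj_elim (h : Hilb Γ (A.disj B)) (h₁ : Hilb Γ (A.imp C)) (h₂ : Hilb Γ (B.imp C)) :
    Hilb Γ C :=
  .mp (.mp (.mp (.ax10 A B C) h₁) h₂) h

theorem iff_mp (h : Hilb Γ (Fml.iff' A B)) : Hilb Γ (A.imp B) := conj_left h

theorem iff_mpr (h : Hilb Γ (Fml.iff' A B)) : Hilb Γ (B.imp A) := conj_right h

theorem disj_imp_bot (A : Fml α) : Hilb Γ (A.disj (A.imp .bot)) :=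
  .mp (.ax3 _ .bot) (deduction (.mp (.ax9 A _) (imp_trans (.ax8 A _) (assumption _))))

theorem neg_of_imp_bot (h : Hilb Γ (A.imp .bot)) : Hilb Γ A.neg :=
  disj_elim (.ax15 A) (imp_trans h (.ax4 A.neg)) (imp_self A.neg)

theorem neg_neg_intro (h : Hilb Γ A) : Hilb Γ A.neg.neg := .mp (iff_mpr (.ax11 A)) h

end Hilb

namespace Fml

variable {α : Type}

/-- `hasVal v A` expresses in the object language that `A` takes the value `v`; `· → ⊥` is the
classical negation of LP→⊥. -/
def hasVal : V3 → Fml α → Fml α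
  | .t, A => A.conj (A.neg.imp .bot)
  | .f, A => A.imp .bot
  | .b, A => A.conj A.neg

end Fml

namespace Hilb

open Fml

variable {α : Type} {Γ : Set (Fml α)} {A B : Fml α}

theorem hasVal_neg : ∀ {u : V3}, Hilb Γ (hasVal u A) → Hilb Γ (hasVal (negT u) A.neg)
  | .t, hA => conj_right hA
  | .f, hA => conj_intro (neg_of_imp_bot hA) (imp_trans (iff_mp (.ax11 A)) hA)
  | .b, hA => conj_intro (conj_right hA) (neg_neg_intro (conj_left hA))

theorem hasVal_conj : ∀ {u v : V3}, Hilb Γ (hasVal u A) → Hilb Γ (hasVal v B) →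
    Hilb Γ (hasVal (conjT u v) (A.conj B))
  | .f, _, hA, _ => imp_trans (.ax5 A B) hA
  | .t, .f, _, hB => imp_trans (.ax6 A B) hB
  | .b, .f, _, hB => imp_trans (.ax6 A B) hB
  | .t, .t, hA, hB => conj_intro (conj_intro (conj_left hA) (conj_left hB))
      (imp_trans (iff_mp (.ax13 A B)) (.mp (.mp (.ax10 _ _ _) (conj_right hA)) (conj_right hB)))
  | .t, .b, hA, hB => conj_intro (conj_intro (conj_left hA) (conj_left hB))
      (.mp (iff_mpr (.ax13 A B)) (.mp (.ax9 _ _) (conj_right hB)))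
  | .b, .t, hA, hB => conj_intro (conj_intro (conj_left hA) (conj_left hB))
      (.mp (iff_mpr (.ax13 A B)) (.mp (.ax8 _ _) (conj_right hA)))
  | .b, .b, hA, hB => conj_intro (conj_intro (conj_left hA) (conj_left hB))
      (.mp (iff_mpr (.ax13 A B)) (.mp (.ax8 _ _) (conj_right hA)))

theorem hasVal_disj : ∀ {u v : V3}, Hilb Γ (hasVal u A) → Hilb Γ (hasVal v B) →
    Hilb Γ (hasVal (disjT u v) (A.disj B))
  | .t, _, hA, _ => conj_intro (.mp (.ax8 A B) (conj_left hA))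
      (imp_trans (iff_mp (.ax14 A B)) (imp_trans (.ax5 _ _) (conj_right hA)))
  | .f, .t, _, hB => conj_intro (.mp (.ax9 A B) (conj_left hB))
      (imp_trans (iff_mp (.ax14 A B)) (imp_trans (.ax6 _ _) (conj_right hB)))
  | .b, .t, _, hB => conj_intro (.mp (.ax9 A B) (conj_left hB))
      (imp_trans (iff_mp (.ax14 A B)) (imp_trans (.ax6 _ _) (conj_right hB)))
  | .f, .f, hA, hB => .mp (.mp (.ax10 A B .bot) hA) hB
  | .f, .b, hA, hB => conj_intro (.mp (.ax9 A B) (conj_left hB))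
      (.mp (iff_mpr (.ax14 A B)) (conj_intro (neg_of_imp_bot hA) (conj_right hB)))
  | .b, .f, hA, hB => conj_intro (.mp (.ax8 A B) (conj_left hA))
      (.mp (iff_mpr (.ax14 A B)) (conj_intro (conj_right hA) (neg_of_imp_bot hB)))
  | .b, .b, hA, hB => conj_intro (.mp (.ax8 A B) (conj_left hA))
      (.mp (iff_mpr (.ax14 A B)) (conj_intro (conj_right hA) (conj_right hB)))

theorem hasVal_imp : ∀ {u v : V3}, Hilb Γ (hasVal u A) → Hilb Γ (hasVal v B) →
    Hilb Γ (hasVal (impT u v) (A.imp B))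
  | .f, _, hA, _ => conj_intro (imp_trans hA (.ax4 B))
      (imp_trans (iff_mp (.ax12 A B)) (imp_trans (.ax5 _ _) hA))
  | .t, .t, _, hB => conj_intro (.mp (.ax1 B A) (conj_left hB))
      (imp_trans (iff_mp (.ax12 A B)) (imp_trans (.ax6 _ _) (conj_right hB)))
  | .b, .t, _, hB => conj_intro (.mp (.ax1 B A) (conj_left hB))
      (imp_trans (iff_mp (.ax12 A B)) (imp_trans (.ax6 _ _) (conj_right hB)))
  | .t, .f, hA, hB =>
      deduction (.mp (hB.weaken _) (.mp (assumption _) ((conj_left hA).weaken _)))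
  | .b, .f, hA, hB =>
      deduction (.mp (hB.weaken _) (.mp (assumption _) ((conj_left hA).weaken _)))
  | .t, .b, hA, hB => conj_intro (.mp (.ax1 B A) (conj_left hB))
      (.mp (iff_mpr (.ax12 A B)) (conj_intro (conj_left hA) (conj_right hB)))
  | .b, .b, hA, hB => conj_intro (.mp (.ax1 B A) (conj_left hB))
      (.mp (iff_mpr (.ax12 A B)) (conj_intro (conj_left hA) (conj_right hB)))

/-- Kalmár's lemma for LP→⊥. -/
theorem hasVal_eval (σ : α → V3) (A : Fml α) :
    Hilb {B | ∃ x, B = hasVal (σ x) (.var x)} (hasVal (eval σ A) A) := by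
  induction A with
  | var x => exact .hyp ⟨x, rfl⟩
  | bot => exact imp_self .bot
  | neg A ih => exact hasVal_neg ih
  | conj A B ihA ihB => exact hasVal_conj ihA ihB
  | disj A B ihA ihB => exact hasVal_disj ihA ihB
  | imp A B ihA ihB => exact hasVal_imp ihA ihB

theorem of_forall_hasVal_var {C : Fml α} (x : α)
    (h : ∀ v, Hilb (insert (hasVal v (.var x)) Γ) C) : Hilb Γ C := by
  have hb : Hilb Γ ((hasVal .b (.var x)).imp C) := deduction (h .b)
  have ht : Hilb Γ ((hasVal .t (.var x)).imp C) := deduction (h .t)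
  refine disj_elim (disj_imp_bot (.var x)) (deduction ?_) (deduction (h .f))
  refine disj_elim (disj_imp_bot (Fml.var x).neg) (deduction ?_) (deduction ?_)
  · exact .mp ((hb.weaken _).weaken _) (conj_intro ((assumption _).weaken _) (assumption _))
  · exact .mp ((ht.weaken _).weaken _) (conj_intro ((assumption _).weaken _) (assumption _))

theorem of_forall_valuation (l : List α) {C : Fml α}
    (h : ∀ σ : α → V3, Hilb {B | ∃ x ∈ l, B = hasVal (σ x) (.var x)} C) : Hilb ∅ C := by
  classical
  induction l with
  | nil => exact (h fun _ => .t).mono (by rintro B ⟨x, hx, -⟩; exact absurd hx List.not_mem_nil)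
  | cons x l ih =>
    refine ih fun σ => of_forall_hasVal_var x fun v => (h (Function.update σ x v)).mono ?_
    rintro B ⟨y, hy, rfl⟩
    by_cases hyx : y = x
    · subst hyx
      simp
    · simp only [Function.update_of_ne hyx]
      exact Or.inr ⟨y, (List.mem_cons.mp hy).resolve_left hyx, rfl⟩

theorem of_forall_eval_ne_f [Fintype α] {C : Fml α} (h : ∀ σ : α → V3, eval σ C ≠ .f) :
    Hilb ∅ C := by
  refine of_forall_valuation Finset.univ.toList fun σ => ?_
  have hC : Hilb {B | ∃ x ∈ Finset.univ.toList, B = hasVal (σ x) (.var x)}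
      (hasVal (eval σ C) C) :=
    (hasVal_eval σ C).mono (by rintro B ⟨x, rfl⟩; exact ⟨x, by simp, rfl⟩)
  have hσ := h σ
  revert hC hσ
  cases eval σ C with
  | f => exact fun _ hσ => absurd rfl hσ
  | t | b => exact fun hC _ => conj_left hC

end Hilb

theorem PropEq.of_fequiv {α : Type} [Fintype α] {φ ψ : Fml α} (h : FEquiv φ ψ) : PropEq φ ψ := by
  refine .imp (Hilb.of_forall_eval_ne_f fun σ => ?_)
  simp only [InternEq, Fml.iff', eval, h σ]
  cases eval σ ψ <;> simp [conjT, impT, negT]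

namespace FEquiv

variable {α : Type}

theorem conj_comm (φ ψ : Fml α) : FEquiv (φ.conj ψ) (ψ.conj φ) := by
  intro σ; simp only [eval]; cases eval σ φ <;> cases eval σ ψ <;> rfl

theorem conj_self (φ : Fml α) : FEquiv (φ.conj φ) φ := by
  intro σ; simp only [eval]; cases eval σ φ <;> rfl

theorem conj_imp_self (θ φ : Fml α) : FEquiv (θ.conj (φ.imp θ)) θ := by
  intro σ; simp only [eval]; cases eval σ θ <;> cases eval σ φ <;> rfl

theorem conj_conj_right (φ ψ : Fml α) : FEquiv ((φ.conj ψ).conj ψ) (φ.conj ψ) := by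
  intro σ; simp only [eval]; cases eval σ φ <;> cases eval σ ψ <;> rfl

end FEquiv

theorem EqBot.conj_comm {α : Type} {φ ψ : Fml α} (h : EqBot (φ.conj ψ)) : EqBot (ψ.conj φ) :=
  fun σ => (FEquiv.conj_comm ψ φ σ).trans (h σ)

/-! ### Characteristic formulas of valuations -/

instance : Fintype V3 where
  elems := {.t, .f, .b}
  complete v := by cases v <;> simp

namespace Fml

variable {α : Type}

def isVal : V3 → α → Fml α
  | .t, x => (var x).neg.imp .bot
  | .f, x => (var x).imp .bot
  | .b, x => (((var x).imp .bot).imp .bot).conj (((var x).neg.imp .bot).imp .bot)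

def conjList : List (Fml α) → Fml α
  | [] => top
  | A :: l => A.conj (conjList l)

def disjList : List (Fml α) → Fml α
  | [] => bot
  | A :: l => A.disj (disjList l)

open Classical in
noncomputable def worlds [Fintype α] : List (α → V3) := Finset.univ.toList

noncomputable def charFml [Fintype α] (σ : α → V3) : Fml α :=
  conjList (Finset.univ.toList.map fun x => isVal (σ x) x)

theorem mem_worlds [Fintype α] (σ : α → V3) : σ ∈ (worlds : List (α → V3)) := by
  classical
  exact Finset.mem_toList.mpr (Finset.mem_univ σ)

theorem eval_isVal (τ : α → V3) (v : V3) (x : α) :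
    eval τ (isVal v x) = if τ x = v then .t else .f := by
  cases v <;> cases h : τ x <;> simp [isVal, eval, negT, impT, conjT, h]

theorem eval_conjList_isVal (τ σ : α → V3) (l : List α) :
    eval τ (conjList (l.map fun x => isVal (σ x) x)) = if ∀ x ∈ l, τ x = σ x then .t else .f := by
  induction l with
  | nil => rfl
  | cons x l ih =>
    simp only [List.map_cons, conjList, eval, ih, eval_isVal, List.forall_mem_cons]
    split_ifs <;> first | rfl | tauto

theorem eval_charFml [Fintype α] (τ σ : α → V3) :
    eval τ (charFml σ) = if τ = σ then .t else .f := by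
  classical
  simp only [charFml, eval_conjList_isVal, Finset.mem_toList, Finset.mem_univ, forall_const,
    funext_iff]

theorem eval_disjList_map {ι : Type} [DecidableEq ι] (τ : α → V3) (F : ι → Fml α) (i : ι)
    (l : List ι) (hF : ∀ j ∈ l, j ≠ i → eval τ (F j) = .f) :
    eval τ (disjList (l.map F)) = if i ∈ l then eval τ (F i) else .f := by
  induction l with
  | nil => rfl
  | cons j l ih =>
    simp only [List.map_cons, disjList, eval, List.mem_cons]
    rw [ih fun k hk => hF k (List.mem_cons_of_mem _ hk)]
    by_cases hji : j = i
    · subst hji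
      simp only [true_or, if_true]
      split_ifs <;> cases eval τ (F j) <;> rfl
    · rw [hF j List.mem_cons_self hji]
      simp only [Ne.symm hji, false_or]
      cases (if i ∈ l then eval τ (F i) else .f) <;> rfl

theorem _root_.FEquiv.charFml_conj [Fintype α] {σ : α → V3} {A B : Fml α}
    (h : eval σ A = eval σ B) : FEquiv ((charFml σ).conj A) ((charFml σ).conj B) := by
  intro τ
  by_cases hτ : τ = σ
  · subst hτ
    simp only [eval, eval_charFml, if_true, h]
  · simp only [eval, eval_charFml, hτ, if_false, conjT]

theorem _root_.FEquiv.disjList_charFml [Fintype α] (φ : Fml α) :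
    FEquiv φ (disjList (worlds.map fun σ => (charFml σ).conj φ)) := by
  classical
  intro τ
  rw [eval_disjList_map τ _ τ _ fun σ _ hσ => by simp [eval, eval_charFml, Ne.symm hσ, conjT]]
  simp only [mem_worlds, if_true, eval, eval_charFml]
  cases eval τ φ <;> rfl

end Fml

/-! ### The transitions of a term, as a list -/

namespace SPT

variable {α Act S : Type}

/-- A transition `p –φ,a→ o` of a given `p`, as the triple `(φ, a, o)`; `o = none` stands
for `√`. -/
abbrev Step (α Act S : Type) := Fml α × Act × Option (SPT α Act S)

section Steps

open Classical

variable (γ : Option Act → Option Act → Option Act) (actF : Option Act → S → Option Act)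
  (effF : Option Act → S → S) (sigF : S → Fml α)

noncomputable def seqStep (y : SPT α Act S) : Step α Act S → Option (Step α Act S)
  | (φ, a, none) => if EqBot (sigS sigF y) then none else some (φ, a, some y)
  | (φ, a, some x') => some (φ, a, some (.seq x' y))

noncomputable def gcStep (ψ : Fml α) (z : Step α Act S) : Option (Step α Act S) :=
  if EqBot (z.1.conj ψ) then none else some (z.1.conj ψ, z.2)

noncomputable def mergeLeftStep (y : SPT α Act S) : Step α Act S → Option (Step α Act S)
  | (φ, a, none) => if EqBot (sigS sigF y) then none else some (φ, a, some y)
  | (φ, a, some x') =>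
    if EqBot (sigS sigF (.par x' y)) then none else some (φ, a, some (.par x' y))

noncomputable def mergeRightStep (x : SPT α Act S) : Step α Act S → Option (Step α Act S)
  | (ψ, b, none) => if EqBot (sigS sigF x) then none else some (ψ, b, some x)
  | (ψ, b, some y') =>
    if EqBot (sigS sigF (.par x y')) then none else some (ψ, b, some (.par x y'))

def commTarget : Option (SPT α Act S) → Option (SPT α Act S) → Option (SPT α Act S)
  | none, none => none
  | none, some y' => some y'
  | some x', none => some x'
  | some x', some y' => some (.par x' y')

noncomputable def commStep : Step α Act S × Step α Act S → Option (Step α Act S)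
  | ((φ, a, o₁), (ψ, b, o₂)) =>
    match γ (some a) (some b) with
    | none => none
    | some c =>
      if ¬ EqBot (φ.conj ψ) ∧ ∀ x' ∈ o₁, ∀ y' ∈ o₂, ¬ EqBot (sigS sigF (.par x' y'))
      then some (φ.conj ψ, c, commTarget o₁ o₂) else none

noncomputable def encapStep (H : Set Act) (z : Step α Act S) : Option (Step α Act S) :=
  if z.2.1 ∈ H then none else some (z.1, z.2.1, z.2.2.map (.encap H))

noncomputable def stStep (s : S) : Step α Act S → Option (Step α Act S)
  | (φ, a, o) =>
    match actF (some a) s, o with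
    | none, _ => none
    | some a', none => some (φ, a', none)
    | some a', some x' =>
        if EqBot (sigS sigF (.st (effF (some a) s) x')) then none
        else some (φ, a', some (.st (effF (some a) s) x'))

noncomputable def steps : SPT α Act S → List (Step α Act S)
  | .act a => [(Fml.top, a, none)]
  | .delta => []
  | .nex => []
  | .alt x y => if EqBot (sigS sigF (.alt x y)) then [] else steps x ++ steps y
  | .seq x y => (steps x).filterMap (seqStep sigF y)
  | .gc ψ x => (steps x).filterMap (gcStep ψ)
  | .se ψ x => if EqBot (sigS sigF (.se ψ x)) then [] else steps x
  | .par x y =>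
      if EqBot (sigS sigF (.par x y)) then [] else
        (steps x).filterMap (mergeLeftStep sigF y) ++
          (steps y).filterMap (mergeRightStep sigF x) ++
          (steps x ×ˢ steps y).filterMap (commStep γ sigF)
  | .lm x y =>
      if EqBot (sigS sigF (.lm x y)) then [] else (steps x).filterMap (mergeLeftStep sigF y)
  | .cm x y =>
      if EqBot (sigS sigF (.cm x y)) then [] else (steps x ×ˢ steps y).filterMap (commStep γ sigF)
  | .encap H x => (steps x).filterMap (encapStep H)
  | .st s x =>
      if EqBot (sigS sigF (.st s x)) then [] else (steps x).filterMap (stStep actF effF sigF s)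

local notation:50 p " ⟶[" z "]" => STr γ actF effF sigF p z.1 z.2.1 z.2.2

variable {γ actF effF sigF} {x y : SPT α Act S} {z z₁ z₂ w : Step α Act S}

theorem _root_.STr.seq_of_seqStep (hx : x ⟶[z]) (h : seqStep sigF y z = some w) :
    .seq x y ⟶[w] := by
  obtain ⟨φ, a, _ | x'⟩ := z
  · simp only [seqStep, Option.ite_none_left_eq_some, Option.some.injEq] at h
    obtain ⟨hy, rfl⟩ := h
    exact .seqT y hx hy
  · obtain rfl := Option.some.inj h
    exact .seqS y hx

theorem _root_.STr.gc_of_gcStep {ψ : Fml α} (hx : x ⟶[z]) (h : gcStep ψ z = some w) :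
    .gc ψ x ⟶[w] := by
  simp only [gcStep, Option.ite_none_left_eq_some, Option.some.injEq] at h
  obtain ⟨hψ, rfl⟩ := h
  exact .gcR ψ hx hψ

theorem _root_.STr.par_of_mergeLeftStep (hx : x ⟶[z]) (h : mergeLeftStep sigF y z = some w)
    (hxy : ¬ EqBot (sigS sigF (.par x y))) : .par x y ⟶[w] ∧ .lm x y ⟶[w] := by
  obtain ⟨φ, a, _ | x'⟩ := z <;>
    simp only [mergeLeftStep, Option.ite_none_left_eq_some, Option.some.injEq] at h <;>
    obtain ⟨hy, rfl⟩ := h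
  · exact ⟨.parTL y hx hxy hy, .lmT y hx hxy hy⟩
  · exact ⟨.parSL y hx hxy hy, .lmS y hx hxy hy⟩

theorem _root_.STr.par_of_mergeRightStep (hy : y ⟶[z]) (h : mergeRightStep sigF x z = some w)
    (hxy : ¬ EqBot (sigS sigF (.par x y))) : .par x y ⟶[w] := by
  obtain ⟨ψ, b, _ | y'⟩ := z <;>
    simp only [mergeRightStep, Option.ite_none_left_eq_some, Option.some.injEq] at h <;>
    obtain ⟨hx, rfl⟩ := h
  · exact .parTR x hy hxy hx
  · exact .parSR x hy hxy hx

theorem _root_.STr.par_of_commStep (hx : x ⟶[z₁]) (hy : y ⟶[z₂])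
    (h : commStep γ sigF (z₁, z₂) = some w) (hxy : ¬ EqBot (sigS sigF (.par x y))) :
    .par x y ⟶[w] ∧ .cm x y ⟶[w] := by
  obtain ⟨φ, a, o₁⟩ := z₁
  obtain ⟨ψ, b, o₂⟩ := z₂
  rcases hc : γ (some a) (some b) with _ | c <;> simp only [commStep, hc] at h
  · cases h
  simp only [Option.ite_none_right_eq_some, Option.some.injEq] at h
  obtain ⟨⟨hφψ, ht⟩, rfl⟩ := h
  rcases o₁ with _ | x' <;> rcases o₂ with _ | y'
  · exact ⟨.parCTT hx hy hc hφψ hxy, .cmTT hx hy hc hφψ hxy⟩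
  · exact ⟨.parCTS hx hy hc hφψ hxy, .cmTS hx hy hc hφψ hxy⟩
  · exact ⟨.parCST hx hy hc hφψ hxy, .cmST hx hy hc hφψ hxy⟩
  · have hs := ht x' rfl y' rfl
    exact ⟨.parCSS hx hy hc hφψ hxy hs, .cmSS hx hy hc hφψ hxy hs⟩

theorem _root_.STr.encap_of_encapStep {H : Set Act} (hx : x ⟶[z]) (h : encapStep H z = some w) :
    .encap H x ⟶[w] := by
  simp only [encapStep, Option.ite_none_left_eq_some, Option.some.injEq] at h
  obtain ⟨ha, rfl⟩ := h
  exact .encapR H hx ha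

theorem _root_.STr.st_of_stStep {s : S} (hx : x ⟶[z]) (h : stStep actF effF sigF s z = some w)
    (hsx : ¬ EqBot (sigS sigF (.st s x))) : .st s x ⟶[w] := by
  obtain ⟨φ, a, o⟩ := z
  rcases ha : actF (some a) s with _ | a' <;> rcases o with _ | x' <;>
    simp only [stStep, ha] at h
  · cases h
  · cases h
  · obtain rfl := Option.some.inj h
    exact .stT s hx ha hsx
  · simp only [Option.ite_none_left_eq_some, Option.some.injEq] at h
    obtain ⟨hs, rfl⟩ := h
    exact .stS s hx ha hsx hs

theorem STr_of_mem_steps : ∀ {p : SPT α Act S} {w}, w ∈ steps γ actF effF sigF p → p ⟶[w]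
  | .act a, w, h => by
    obtain rfl := List.mem_singleton.mp h
    exact .act a
  | .alt x y, w, h => by
    obtain ⟨hb, h⟩ := List.mem_ite_nil_left.mp h
    rcases List.mem_append.mp h with h | h
    · exact .altL y (STr_of_mem_steps h) hb
    · exact .altR x (STr_of_mem_steps h) hb
  | .seq x y, w, h => by
    obtain ⟨z, hz, h⟩ := List.mem_filterMap.mp h
    exact (STr_of_mem_steps hz).seq_of_seqStep h
  | .gc ψ x, w, h => by
    obtain ⟨z, hz, h⟩ := List.mem_filterMap.mp h
    exact (STr_of_mem_steps hz).gc_of_gcStep h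
  | .se ψ x, w, h => by
    obtain ⟨hb, h⟩ := List.mem_ite_nil_left.mp h
    exact .seR ψ (STr_of_mem_steps h) hb
  | .par x y, w, h => by
    obtain ⟨hb, h⟩ := List.mem_ite_nil_left.mp h
    rcases List.mem_append.mp h with h | h
    · rcases List.mem_append.mp h with h | h
      · obtain ⟨z, hz, h⟩ := List.mem_filterMap.mp h
        exact ((STr_of_mem_steps hz).par_of_mergeLeftStep h hb).1
      · obtain ⟨z, hz, h⟩ := List.mem_filterMap.mp h
        exact (STr_of_mem_steps hz).par_of_mergeRightStep h hb
    · obtain ⟨⟨z₁, z₂⟩, hz, h⟩ := List.mem_filterMap.mp h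
      obtain ⟨hz₁, hz₂⟩ := List.mem_product.mp hz
      exact ((STr_of_mem_steps hz₁).par_of_commStep (STr_of_mem_steps hz₂) h hb).1
  | .lm x y, w, h => by
    obtain ⟨hb, h⟩ := List.mem_ite_nil_left.mp h
    obtain ⟨z, hz, h⟩ := List.mem_filterMap.mp h
    exact ((STr_of_mem_steps hz).par_of_mergeLeftStep h hb).2
  | .cm x y, w, h => by
    obtain ⟨hb, h⟩ := List.mem_ite_nil_left.mp h
    obtain ⟨⟨z₁, z₂⟩, hz, h⟩ := List.mem_filterMap.mp h
    obtain ⟨hz₁, hz₂⟩ := List.mem_product.mp hz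
    exact ((STr_of_mem_steps hz₁).par_of_commStep (STr_of_mem_steps hz₂) h hb).2
  | .encap H x, w, h => by
    obtain ⟨z, hz, h⟩ := List.mem_filterMap.mp h
    exact (STr_of_mem_steps hz).encap_of_encapStep h
  | .st s x, w, h => by
    obtain ⟨hb, h⟩ := List.mem_ite_nil_left.mp h
    obtain ⟨z, hz, h⟩ := List.mem_filterMap.mp h
    exact (STr_of_mem_steps hz).st_of_stStep h hb

theorem _root_.STr.mem_steps {p : SPT α Act S} {φ a o} (h : STr γ actF effF sigF p φ a o) :
    (φ, a, o) ∈ steps γ actF effF sigF p := by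
  induction h with
  | act a => exact List.mem_singleton_self _
  | altL y _ hb ih => exact List.mem_ite_nil_left.mpr ⟨hb, List.mem_append_left _ ih⟩
  | altR x _ hb ih => exact List.mem_ite_nil_left.mpr ⟨hb, List.mem_append_right _ ih⟩
  | seqT y _ hy ih => exact List.mem_filterMap.mpr ⟨_, ih, by simp [seqStep, hy]⟩
  | seqS y _ ih => exact List.mem_filterMap.mpr ⟨_, ih, rfl⟩
  | gcR ψ _ hb ih => exact List.mem_filterMap.mpr ⟨_, ih, by simp [gcStep, hb]⟩
  | seR ψ _ hb ih => exact List.mem_ite_nil_left.mpr ⟨hb, ih⟩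
  | parTL y _ hb hy ih | parSL y _ hb hy ih =>
    refine List.mem_ite_nil_left.mpr ⟨hb, List.mem_append_left _ (List.mem_append_left _ ?_)⟩
    exact List.mem_filterMap.mpr ⟨_, ih, by simp [mergeLeftStep, hy]⟩
  | parTR x _ hb hx ih | parSR x _ hb hx ih =>
    refine List.mem_ite_nil_left.mpr ⟨hb, List.mem_append_left _ (List.mem_append_right _ ?_)⟩
    exact List.mem_filterMap.mpr ⟨_, ih, by simp [mergeRightStep, hx]⟩
  | parCTT _ _ hc hφψ hb ih₁ ih₂ | parCTS _ _ hc hφψ hb ih₁ ih₂ | parCST _ _ hc hφψ hb ih₁ ih₂ =>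
    refine List.mem_ite_nil_left.mpr ⟨hb, List.mem_append_right _ ?_⟩
    exact List.mem_filterMap.mpr ⟨(_, _), List.mem_product.mpr ⟨ih₁, ih₂⟩,
      by simp [commStep, commTarget, hc, hφψ]⟩
  | parCSS _ _ hc hφψ hb hs ih₁ ih₂ =>
    refine List.mem_ite_nil_left.mpr ⟨hb, List.mem_append_right _ ?_⟩
    exact List.mem_filterMap.mpr ⟨(_, _), List.mem_product.mpr ⟨ih₁, ih₂⟩,
      by simp [commStep, commTarget, hc, hφψ, hs]⟩
  | lmT y _ hb hy ih | lmS y _ hb hy ih =>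
    exact List.mem_ite_nil_left.mpr ⟨hb, List.mem_filterMap.mpr
      ⟨_, ih, by simp [mergeLeftStep, hy]⟩⟩
  | cmTT _ _ hc hφψ hb ih₁ ih₂ | cmTS _ _ hc hφψ hb ih₁ ih₂ | cmST _ _ hc hφψ hb ih₁ ih₂ =>
    exact List.mem_ite_nil_left.mpr ⟨hb, List.mem_filterMap.mpr ⟨(_, _),
      List.mem_product.mpr ⟨ih₁, ih₂⟩, by simp [commStep, commTarget, hc, hφψ]⟩⟩
  | cmSS _ _ hc hφψ hb hs ih₁ ih₂ =>
    exact List.mem_ite_nil_left.mpr ⟨hb, List.mem_filterMap.mpr ⟨(_, _),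
      List.mem_product.mpr ⟨ih₁, ih₂⟩, by simp [commStep, commTarget, hc, hφψ, hs]⟩⟩
  | encapR H _ ha ih => exact List.mem_filterMap.mpr ⟨_, ih, by simp [encapStep, ha]⟩
  | stT s _ ha hb ih =>
    exact List.mem_ite_nil_left.mpr ⟨hb, List.mem_filterMap.mpr ⟨_, ih, by simp [stStep, ha]⟩⟩
  | stS s _ ha hb hs ih =>
    exact List.mem_ite_nil_left.mpr ⟨hb, List.mem_filterMap.mpr
      ⟨_, ih, by simp [stStep, ha, hs]⟩⟩

theorem _root_.STr.sizeOf_lt {p : SPT α Act S} {φ a o} (h : STr γ actF effF sigF p φ a o) :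
    ∀ t ∈ o, sizeOf t < sizeOf p := by
  induction h with
  | encapR H _ _ ih =>
    intro t ht
    obtain ⟨x', hx', rfl⟩ := Option.mem_map.mp ht
    have := ih x' hx'
    simp only [encap.sizeOf_spec]
    omega
  | _ => rintro t ⟨⟩ <;> simp_all <;> omega

end Steps

end SPT

namespace SPT

variable {α Act S : Type}

def sumL : List (SPT α Act S) → SPT α Act S
  | [] => .delta
  | x :: xs => .alt x (sumL xs)

/-- `a` or `a · t`, according as an action step ends in `√` or in `t`. -/
def prefixed (a : Act) (o : Option (SPT α Act S)) : SPT α Act S :=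
  o.elim (.act a) (.seq (.act a))

def Step.term (z : Step α Act S) : SPT α Act S := .gc z.1 (prefixed z.2.1 z.2.2)

variable (γ : Option Act → Option Act → Option Act) (actF : Option Act → S → Option Act)
  (effF : Option Act → S → S) (sigF : S → Fml α)

noncomputable def hnf (p : SPT α Act S) : SPT α Act S :=
  .se (sigS sigF p) (sumL ((steps γ actF effF sigF p).map Step.term))

/-- The summands of the head normal form of `p`, each split over all valuations `σ`. -/
noncomputable def atoms [Fintype α] (p : SPT α Act S) : List (SPT α Act S) :=
  (steps γ actF effF sigF p).flatMap fun z =>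
    Fml.worlds.map fun σ =>
      .gc ((Fml.charFml σ).conj ((sigS sigF p).conj z.1)) (prefixed z.2.1 z.2.2)

end SPT

/-! ### Derivable equalities: sums, signals and summands -/

namespace SDeriv

open SPT Fml

variable {α Act S : Type} {γ : Option Act → Option Act → Option Act}
  {actF : Option Act → S → Option Act} {effF : Option Act → S → S} {sigF : S → Fml α}

local infix:50 " ⋍ " => SDeriv γ actF effF sigF

local notation "hnf" => SPT.hnf γ actF effF sigF

variable {x y z x' y' : SPT α Act S} {φ ψ Φ θ : Fml α}

theorem delta_alt (x : SPT α Act S) : .alt .delta x ⋍ x := .trans (.A1 _ _) (.A6 x)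

theorem alt_left_comm (x y z : SPT α Act S) : .alt x (.alt y z) ⋍ .alt y (.alt x z) :=
  .trans (.symm (.A2 _ _ _)) (.trans (.altC (.A1 _ _) (.refl _)) (.A2 _ _ _))

theorem se_alt_se (φ ψ : Fml α) (x y : SPT α Act S) :
    .alt (.se φ x) (.se ψ y) ⋍ .se (φ.conj ψ) (.alt x y) := by
  refine .trans (.SE4 φ x _) (.trans (.seC (.refl φ) ?_) (.SE6 φ ψ _))
  exact .trans (.A1 _ _) (.trans (.SE4 ψ y x) (.seC (.refl ψ) (.A1 _ _)))

theorem alt_se_delta (θ : Fml α) (x : SPT α Act S) : .alt x (.se θ .delta) ⋍ .se θ x :=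
  .trans (.A1 _ _) (.trans (.SE4 θ .delta x) (.seC (.refl θ) (delta_alt x)))

theorem se_alt_left (φ : Fml α) (x y : SPT α Act S) : .se φ (.alt x y) ⋍ .alt x (.se φ y) :=
  .trans (.seC (.refl φ) (.A1 _ _)) (.trans (.symm (.SE4 φ y x)) (.A1 _ _))

theorem sumL_append (l₁ l₂ : List (SPT α Act S)) :
    sumL (l₁ ++ l₂) ⋍ .alt (sumL l₁) (sumL l₂) := by
  induction l₁ with
  | nil => exact .symm (delta_alt _)
  | cons x l₁ ih => exact .trans (.altC (.refl x) ih) (.symm (.A2 _ _ _))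

theorem sumL_eq_delta {l : List (SPT α Act S)} (h : ∀ z ∈ l, z ⋍ .delta) :
    sumL l ⋍ .delta := by
  induction l with
  | nil => exact .refl _
  | cons z l ih =>
    exact .trans (.altC (h z List.mem_cons_self) (ih fun w hw => h w (List.mem_cons_of_mem _ hw)))
      (.A6 _)

theorem sumL_map_congr {ι : Type} {l : List ι} {f g : ι → SPT α Act S}
    (h : ∀ i ∈ l, f i ⋍ g i) : sumL (l.map f) ⋍ sumL (l.map g) := by
  induction l with
  | nil => exact .refl _
  | cons i l ih =>
    exact .altC (h i List.mem_cons_self) (ih fun j hj => h j (List.mem_cons_of_mem _ hj))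

theorem sumL_map_flatMap {ι : Type} {l : List ι} {f : ι → SPT α Act S}
    {g : ι → List (SPT α Act S)} (h : ∀ i ∈ l, f i ⋍ sumL (g i)) :
    sumL (l.map f) ⋍ sumL (l.flatMap g) := by
  induction l with
  | nil => exact .refl _
  | cons i l ih =>
    refine .trans (.altC (h i List.mem_cons_self) (ih fun j hj => h j (List.mem_cons_of_mem _ hj)))
      (.symm (sumL_append _ _))

theorem sumL_map_filterMap {ι κ : Type} {l : List ι} {f : ι → SPT α Act S} {g : ι → Option κ}
    {k : κ → SPT α Act S} (h : ∀ i ∈ l, f i ⋍ (g i).elim .delta k) :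
    sumL (l.map f) ⋍ sumL ((l.filterMap g).map k) := by
  induction l with
  | nil => exact .refl _
  | cons i l ih =>
    have hl := ih fun j hj => h j (List.mem_cons_of_mem _ hj)
    have hi := h i List.mem_cons_self
    rcases hg : g i with _ | w <;> rw [hg] at hi <;> simp only [List.filterMap_cons, hg]
    · exact .trans (.altC hi hl) (delta_alt _)
    · exact .altC hi hl

theorem alt_sumL_of_mem {l : List (SPT α Act S)} (hz : z ∈ l) : .alt z (sumL l) ⋍ sumL l := by
  induction l with
  | nil => exact absurd hz List.not_mem_nil
  | cons y l ih =>
    rcases List.mem_cons.mp hz with rfl | hz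
    · exact .trans (.symm (.A2 _ _ _)) (.altC (.A3 z) (.refl _))
    · exact .trans (alt_left_comm _ _ _) (.altC (.refl y) (ih hz))

theorem sumL_alt_sumL {l₁ l₂ : List (SPT α Act S)}
    (h : ∀ z ∈ l₁, z ⋍ .delta ∨ ∃ w ∈ l₂, z ⋍ w) : .alt (sumL l₁) (sumL l₂) ⋍ sumL l₂ := by
  induction l₁ with
  | nil => exact delta_alt _
  | cons z l₁ ih =>
    refine .trans (.A2 _ _ _)
      (.trans (.altC (.refl z) (ih fun u hu => h u (List.mem_cons_of_mem _ hu))) ?_)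
    rcases h z List.mem_cons_self with hz | ⟨w, hw, hzw⟩
    · exact .trans (.altC hz (.refl _)) (delta_alt _)
    · exact .trans (.altC hzw (.refl _)) (alt_sumL_of_mem hw)

theorem sumL_congr {l₁ l₂ : List (SPT α Act S)}
    (h₁ : ∀ z ∈ l₁, z ⋍ .delta ∨ ∃ w ∈ l₂, z ⋍ w) (h₂ : ∀ w ∈ l₂, w ⋍ .delta ∨ ∃ z ∈ l₁, w ⋍ z) :
    sumL l₁ ⋍ sumL l₂ :=
  .trans (.symm (sumL_alt_sumL h₂)) (.trans (.A1 _ _) (sumL_alt_sumL h₁))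

theorem seq_sumL (l : List (SPT α Act S)) (y : SPT α Act S) :
    .seq (sumL l) y ⋍ sumL (l.map (.seq · y)) := by
  induction l with
  | nil => exact .A7 y
  | cons z l ih => exact .trans (.A4 _ _ _) (.altC (.refl _) ih)

theorem gc_sumL (φ : Fml α) (l : List (SPT α Act S)) :
    .gc φ (sumL l) ⋍ sumL (l.map (.gc φ)) := by
  induction l with
  | nil => exact .GC3 φ
  | cons z l ih => exact .trans (.GC4 _ _ _) (.altC (.refl _) ih)

theorem encap_sumL (H : Set Act) (l : List (SPT α Act S)) :
    .encap H (sumL l) ⋍ sumL (l.map (.encap H)) := by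
  induction l with
  | nil => exact .D1d H
  | cons z l ih => exact .trans (.D3 _ _ _) (.altC (.refl _) ih)

theorem lm_sumL (l : List (SPT α Act S)) (y : SPT α Act S) :
    .lm (sumL l) y ⋍ .alt (sumL (l.map (.lm · y))) (.encap Set.univ y) := by
  induction l with
  | nil => exact .trans (.CM2S none y) (.altC (.A7 y) (.refl _))
  | cons z l ih => exact .trans (.CM4 _ _ _) (.trans (.altC (.refl _) ih) (.symm (.A2 _ _ _)))

theorem st_sumL (hactdelta : ∀ s, actF none s = none) (s : S) (l : List (SPT α Act S)) :
    .st s (sumL l) ⋍ .alt (sumL (l.map (.st s))) (.se (sigF s) .delta) := by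
  induction l with
  | nil =>
    refine .trans (.SO1 none s) ?_
    rw [hactdelta s]
    exact .symm (delta_alt _)
  | cons z l ih => exact .trans (.SO3 s z _) (.trans (.altC (.refl _) ih) (.symm (.A2 _ _ _)))

theorem gc_disjList (l : List (Fml α)) (x : SPT α Act S) :
    .gc (disjList l) x ⋍ sumL (l.map (.gc · x)) := by
  induction l with
  | nil => exact .GC2 x
  | cons A l ih => exact .trans (.GC7 _ _ _) (.altC (.refl _) ih)

theorem encap_univ_prefixed (a : Act) (o : Option (SPT α Act S)) :
    .encap Set.univ (prefixed a o) ⋍ .delta := by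
  cases o with
  | none => exact .D2 Set.univ a (Set.mem_univ a)
  | some t =>
    exact .trans (.D4 _ _ t) (.trans (.seqC (.D2 Set.univ a (Set.mem_univ a)) (.refl _)) (.A7 _))

theorem encap_univ_term (z : Step α Act S) : .encap Set.univ z.term ⋍ .delta :=
  .trans (.GC11 _ _ _) (.trans (.gcC (.refl _) (encap_univ_prefixed _ _)) (.GC3 _))

theorem encap_univ_of_eq_hnf (hy : y ⋍ hnf y) : .encap Set.univ y ⋍ .se (sigS sigF y) .delta := by
  refine .trans (.encapC _ hy) (.trans (.SE12 _ _ _) (.seC (.refl _) ?_))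
  refine .trans (encap_sumL _ _) (sumL_eq_delta fun w hw => ?_)
  obtain ⟨t, ht, rfl⟩ := List.mem_map.mp hw
  obtain ⟨z, -, rfl⟩ := List.mem_map.mp ht
  exact encap_univ_term z

theorem encap_term (H : Set Act) (z : Step α Act S) :
    .encap H z.term ⋍ (encapStep H z).elim .delta Step.term := by
  obtain ⟨φ, a, o⟩ := z
  refine .trans (.GC11 _ _ _) ?_
  by_cases ha : a ∈ H
  · simp only [encapStep, if_pos ha, Option.elim]
    refine .trans (.gcC (.refl φ) ?_) (.GC3 φ)
    cases o with
    | none => exact .D2 H a ha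
    | some t => exact .trans (.D4 _ _ _) (.trans (.seqC (.D2 H a ha) (.refl _)) (.A7 _))
  · simp only [encapStep, if_neg ha, Option.elim]
    refine .gcC (.refl φ) ?_
    cases o with
    | none => exact .D1 H a ha
    | some t => exact .trans (.D4 _ _ _) (.seqC (.D1 H a ha) (.refl _))

theorem term_cm_term (z₁ z₂ : Step α Act S) :
    .cm z₁.term z₂.term ⋍
      .gc (z₁.1.conj z₂.1) (.cm (prefixed z₁.2.1 z₁.2.2) (prefixed z₂.2.1 z₂.2.2)) := by
  refine .trans (.GC9S _ _ _) (.trans (.altC (.refl _) (encap_univ_term z₂)) (.trans (.A6 _) ?_))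
  refine .trans (.gcC (.refl _) (.trans (.GC10S _ _ _) ?_)) (.GC6 _ _ _)
  exact .trans (.altC (.refl _) (encap_univ_prefixed _ _)) (.A6 _)

theorem delta_cm_term (hγdelta : ∀ a, γ none a = none) (z : Step α Act S) :
    .cm .delta z.term ⋍ .delta := by
  have hpre : SPT.cm .delta (prefixed z.2.1 z.2.2) ⋍ .delta := by
    cases z.2.2 with
    | none => exact .C3 (some z.2.1)
    | some t => exact .trans (.CM6 none (some z.2.1) t) (by rw [hγdelta]; exact .A7 _)
  refine .trans (.GC10S _ _ _) (.trans (.altC (.trans (.gcC (.refl _) hpre) (.GC3 _)) (.D1d _)) ?_)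
  exact .A6 _

theorem term_cm_delta (hγcomm : ∀ a b, γ a b = γ b a) (hγdelta : ∀ a, γ none a = none)
    (z : Step α Act S) : .cm z.term .delta ⋍ .delta := by
  have hγ : γ (some z.2.1) none = none := (hγcomm _ _).trans (hγdelta _)
  have hpre : SPT.cm (prefixed z.2.1 z.2.2) .delta ⋍ .delta := by
    cases z.2.2 with
    | none => exact .trans (.CF (some z.2.1) none) (by rw [hγ]; exact .refl _)
    | some t => exact .trans (.CM5 (some z.2.1) none t) (by rw [hγ]; exact .A7 _)
  refine .trans (.GC9S _ _ _) (.trans (.altC (.trans (.gcC (.refl _) hpre) (.GC3 _)) (.D1d _)) ?_)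
  exact .A6 _

theorem delta_cm_sumL (hγdelta : ∀ a, γ none a = none) (l : List (Step α Act S)) :
    .cm .delta (sumL (l.map Step.term)) ⋍ .delta := by
  induction l with
  | nil => exact .C3 none
  | cons z l ih => exact .trans (.CM9 _ _ _) (.trans (.altC (delta_cm_term hγdelta z) ih) (.A6 _))

theorem term_cm_sumL (hγcomm : ∀ a b, γ a b = γ b a) (hγdelta : ∀ a, γ none a = none)
    (z : Step α Act S) (l : List (Step α Act S)) :
    .cm z.term (sumL (l.map Step.term)) ⋍ sumL (l.map fun w => .cm z.term w.term) := by
  induction l with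
  | nil => exact term_cm_delta hγcomm hγdelta z
  | cons w l ih => exact .trans (.CM9 _ _ _) (.altC (.refl _) ih)

theorem cm_sumL (hγcomm : ∀ a b, γ a b = γ b a) (hγdelta : ∀ a, γ none a = none)
    (l₁ l₂ : List (Step α Act S)) :
    .cm (sumL (l₁.map Step.term)) (sumL (l₂.map Step.term)) ⋍
      sumL ((l₁ ×ˢ l₂).map fun z => .cm z.1.term z.2.term) := by
  induction l₁ with
  | nil => exact delta_cm_sumL hγdelta l₂
  | cons z l₁ ih =>
    rw [List.product_cons, List.map_append, List.map_map]
    exact .trans (.CM8 _ _ _)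
      (.trans (.altC (term_cm_sumL hγcomm hγdelta z l₂) ih) (.symm (sumL_append _ _)))

theorem prefixed_cm_prefixed (a b : Act) (o₁ o₂ : Option (SPT α Act S)) :
    .cm (prefixed a o₁) (prefixed b o₂) ⋍
      (commTarget o₁ o₂).elim (actd (γ (some a) (some b))) (.seq (actd (γ (some a) (some b)))) := by
  rcases o₁ with _ | x' <;> rcases o₂ with _ | y'
  exacts [.CF (some a) (some b), .CM6 (some a) (some b) y', .CM5 (some a) (some b) x',
    .CM7 (some a) (some b) x' y']

theorem prefixed_cm_comm (hγcomm : ∀ a b, γ a b = γ b a) (a b : Act)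
    {o₁ o₂ : Option (SPT α Act S)} (hcomm : ∀ x' ∈ o₁, ∀ y' ∈ o₂, SPT.par x' y' ⋍ .par y' x') :
    .cm (prefixed a o₁) (prefixed b o₂) ⋍ .cm (prefixed b o₂) (prefixed a o₁) := by
  refine .trans (prefixed_cm_prefixed a b o₁ o₂)
    (.trans ?_ (.symm (prefixed_cm_prefixed b a o₂ o₁)))
  rw [hγcomm (some a)]
  rcases o₁ with _ | x' <;> rcases o₂ with _ | y'
  exacts [.refl _, .refl _, .refl _, .seqC (.refl _) (hcomm x' rfl y' rfl)]

theorem lm_eq_se (hx : x ⋍ .se φ x') (hy : y ⋍ .se ψ y') :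
    .lm x y ⋍ .se (φ.conj ψ) (.alt (.lm x' y) (.encap Set.univ y')) := by
  have hδ : SPT.lm .delta y ⋍ .se ψ (.encap Set.univ y') :=
    .trans (.CM2S none y) (.trans (.altC (.A7 y) (.refl _))
      (.trans (delta_alt _) (.trans (.encapC _ hy) (.SE12 _ _ _))))
  refine .trans (.lmC (.symm (.A6 x)) (.refl y)) (.trans (.CM4 _ _ _) ?_)
  exact .trans (.altC (.trans (.lmC hx (.refl y)) (.SE9 _ _ _)) hδ) (se_alt_se _ _ _ _)

theorem cm_eq_se (hx : x ⋍ .se φ x') (hy : y ⋍ .se ψ y') :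
    .cm x y ⋍ .se (φ.conj ψ) (.cm x' y') :=
  .trans (.cmC hx hy) (.trans (.SE10 _ _ _) (.trans (.seC (.refl _) (.SE11 _ _ _)) (.SE6 _ _ _)))

theorem cm_eq_se_sumL (hγcomm : ∀ a b, γ a b = γ b a) (hγdelta : ∀ a, γ none a = none)
    (hx : x ⋍ hnf x) (hy : y ⋍ hnf y) :
    .cm x y ⋍ .se ((sigS sigF x).conj (sigS sigF y))
      (sumL ((SPT.steps γ actF effF sigF x ×ˢ SPT.steps γ actF effF sigF y).map
        fun z => .cm z.1.term z.2.term)) :=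
  .trans (cm_eq_se hx hy) (.seC (.refl _) (cm_sumL hγcomm hγdelta _ _))

theorem st_eq_se_st (hactdelta : ∀ s, actF none s = none) (s : S) (x : SPT α Act S) :
    .st s x ⋍ .se (sigF s) (.st s x) := by
  have hδ : SPT.st s .delta ⋍ .se (sigF s) .delta := by
    have := SDeriv.SO1 (γ := γ) (actF := actF) (effF := effF) (sigF := sigF) none s
    rwa [hactdelta] at this
  exact .trans (.stC s (.symm (.A6 x))) (.trans (.SO3 _ _ _)
    (.trans (.altC (.refl _) hδ) (alt_se_delta _ _)))

section

variable [Fintype α]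

theorem se_fequiv (h : FEquiv φ ψ) (hxy : x ⋍ y) : .se φ x ⋍ .se ψ y :=
  .seC (.of_fequiv h) hxy

theorem gc_fequiv (h : FEquiv φ ψ) (hxy : x ⋍ y) : .gc φ x ⋍ .gc ψ y :=
  .gcC (.of_fequiv h) hxy

theorem se_eqBot (h : EqBot φ) (x : SPT α Act S) : .se φ x ⋍ .nex :=
  .trans (se_fequiv (ψ := .bot) h (.refl x)) (.SE2 x)

theorem gc_eqBot (h : EqBot φ) (x : SPT α Act S) : .gc φ x ⋍ .delta :=
  .trans (gc_fequiv (ψ := .bot) h (.refl x)) (.GC2 x)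

theorem se_of_not_eqBot (h : ¬ EqBot Φ → .se Φ x ⋍ .se Φ y) : .se Φ x ⋍ .se Φ y := by
  by_cases hΦ : EqBot Φ
  · exact .trans (se_eqBot hΦ x) (.symm (se_eqBot hΦ y))
  · exact h hΦ

theorem se_se_of_fequiv (hθ : FEquiv (Φ.conj θ) Φ) (x : SPT α Act S) :
    .se Φ (.se θ x) ⋍ .se Φ x :=
  .trans (.SE6 Φ θ x) (se_fequiv hθ (.refl x))

theorem se_alt_se_self (φ : Fml α) (x y : SPT α Act S) :
    .alt (.se φ x) (.se φ y) ⋍ .se φ (.alt x y) :=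
  .trans (se_alt_se _ _ _ _) (se_fequiv (FEquiv.conj_self φ) (.refl _))

theorem se_sumL_map_se (hθ : FEquiv (Φ.conj θ) Φ) {ι : Type} (l : List ι) (f : ι → SPT α Act S) :
    .se Φ (sumL (l.map fun i => .se θ (f i))) ⋍ .se Φ (sumL (l.map f)) := by
  induction l with
  | nil => exact .refl _
  | cons i l ih =>
    refine .trans (.seC (.refl Φ) (.SE4 θ _ _)) (.trans (se_se_of_fequiv hθ _) ?_)
    exact .trans (se_alt_left _ _ _) (.trans (.altC (.refl _) ih) (.symm (se_alt_left _ _ _)))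

theorem se_sumL_map_filterMap (hθ : FEquiv (Φ.conj θ) Φ) {ι κ : Type} {l : List ι}
    {f : ι → SPT α Act S} {g : ι → Option κ} {k : κ → SPT α Act S}
    (h : ∀ i ∈ l, f i ⋍ .se θ ((g i).elim .delta k)) :
    .se Φ (sumL (l.map f)) ⋍ .se Φ (sumL ((l.filterMap g).map k)) :=
  .trans (.seC (.refl Φ) (sumL_map_congr h)) (.trans (se_sumL_map_se hθ _ _)
    (.seC (.refl Φ) (sumL_map_filterMap fun _ _ => .refl _)))

theorem exists_eq_se_sigS (hactdelta : ∀ s, actF none s = none) :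
    ∀ p : SPT α Act S, ∃ p', p ⋍ .se (sigS sigF p) p'
  | .act a => ⟨.act a, .symm (.SE1 _)⟩
  | .delta => ⟨.delta, .symm (.SE1 _)⟩
  | .nex => ⟨.nex, .symm (.SE3 _)⟩
  | .alt x y =>
    have ⟨x', hx⟩ := exists_eq_se_sigS hactdelta x
    have ⟨y', hy⟩ := exists_eq_se_sigS hactdelta y
    ⟨.alt x' y', .trans (.altC hx hy) (se_alt_se _ _ _ _)⟩
  | .seq x y =>
    have ⟨x', hx⟩ := exists_eq_se_sigS hactdelta x
    ⟨.seq x' y, .trans (.seqC hx (.refl y)) (.SE5 _ _ _)⟩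
  | .gc φ x =>
    have ⟨x', hx⟩ := exists_eq_se_sigS hactdelta x
    ⟨.gc φ x', .trans (.gcC (.refl φ) hx) (.SE8 _ _ _)⟩
  | .se φ x =>
    have ⟨x', hx⟩ := exists_eq_se_sigS hactdelta x
    ⟨x', .trans (.seC (.refl φ) hx) (.SE6 _ _ _)⟩
  | .par x y =>
    have ⟨_, hx⟩ := exists_eq_se_sigS hactdelta x
    have ⟨_, hy⟩ := exists_eq_se_sigS hactdelta y
    ⟨_, .trans (.CM1 x y) (.trans (.altC (.altC (lm_eq_se hx hy)
      (.trans (lm_eq_se hy hx) (se_fequiv (FEquiv.conj_comm _ _) (.refl _)))) (cm_eq_se hx hy))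
      (.trans (.altC (se_alt_se_self _ _ _) (.refl _)) (se_alt_se_self _ _ _)))⟩
  | .lm x y =>
    have ⟨_, hx⟩ := exists_eq_se_sigS hactdelta x
    have ⟨_, hy⟩ := exists_eq_se_sigS hactdelta y
    ⟨_, lm_eq_se hx hy⟩
  | .cm x y =>
    have ⟨_, hx⟩ := exists_eq_se_sigS hactdelta x
    have ⟨_, hy⟩ := exists_eq_se_sigS hactdelta y
    ⟨_, cm_eq_se hx hy⟩
  | .encap H x =>
    have ⟨x', hx⟩ := exists_eq_se_sigS hactdelta x
    ⟨.encap H x', .trans (.encapC H hx) (.SE12 _ _ _)⟩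
  | .st s x =>
    have ⟨x', hx⟩ := exists_eq_se_sigS hactdelta x
    ⟨.st s x', .trans (.stC s hx) (.trans (.SO5 _ _ _)
      (.trans (.seC (.refl _) (st_eq_se_st hactdelta s x')) (.SE6 _ _ _)))⟩

theorem nex_of_eqBot (hactdelta : ∀ s, actF none s = none) {p : SPT α Act S}
    (h : EqBot (sigS sigF p)) : p ⋍ .nex :=
  have ⟨p', hp⟩ := exists_eq_se_sigS hactdelta p
  .trans hp (se_eqBot h p')

theorem gc_seq_of_eqBot (hactdelta : ∀ s, actF none s = none) {t : SPT α Act S}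
    (ht : EqBot (sigS sigF t)) (φ : Fml α) (a : Act) : .gc φ (.seq (.act a) t) ⋍ .delta :=
  .trans (.gcC (.refl φ) (.trans (.seqC (.refl _) (nex_of_eqBot hactdelta ht)) (.NE3 (some a))))
    (.GC3 φ)

theorem seq_term (hactdelta : ∀ s, actF none s = none) (y : SPT α Act S) (z : Step α Act S) :
    .seq z.term y ⋍ (seqStep sigF y z).elim .delta Step.term := by
  obtain ⟨φ, a, _ | x'⟩ := z
  · by_cases hy : EqBot (sigS sigF y)
    · simp only [seqStep, if_pos hy, Option.elim]
      exact .trans (.symm (.GC5 _ _ _)) (gc_seq_of_eqBot hactdelta hy φ a)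
    · simp only [seqStep, if_neg hy, Option.elim]
      exact .symm (.GC5 _ _ _)
  · exact .trans (.symm (.GC5 _ _ _)) (.gcC (.refl φ) (.A5 _ _ _))

theorem gc_term (ψ : Fml α) (z : Step α Act S) :
    .gc ψ z.term ⋍ (gcStep ψ z).elim .delta Step.term := by
  by_cases hb : EqBot (z.1.conj ψ)
  · simp only [gcStep, if_pos hb, Option.elim]
    exact .trans (.GC6 _ _ _) (gc_eqBot hb.conj_comm _)
  · simp only [gcStep, if_neg hb, Option.elim]
    exact .trans (.GC6 _ _ _) (gc_fequiv (FEquiv.conj_comm _ _) (.refl _))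

theorem lm_term_eq (hy : .encap Set.univ y ⋍ .se (sigS sigF y) .delta) (z : Step α Act S) :
    .lm z.term y ⋍
      .se (sigS sigF y) (.gc z.1 (.seq (.act z.2.1) (z.2.2.elim y (.par · y)))) := by
  obtain ⟨φ, a, o⟩ := z
  have hpre : SPT.lm (prefixed a o) y ⋍
      .alt (.seq (.act a) (o.elim y (.par · y))) (.encap Set.univ y) := by
    cases o with
    | none => exact .CM2S (some a) y
    | some x' => exact .CM3S (some a) x' y
  refine .trans (.GC8S _ _ _) (.trans (.altC (.gcC (.refl φ)
    (.trans hpre (.trans (.altC (.refl _) hy) (alt_se_delta _ _)))) hy) ?_)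
  exact .trans (.altC (.SE8 _ _ _) (.refl _)) (.trans (alt_se_delta _ _)
    (se_se_of_fequiv (FEquiv.conj_imp_self _ _) _))

theorem lm_term (hactdelta : ∀ s, actF none s = none)
    (hy : .encap Set.univ y ⋍ .se (sigS sigF y) .delta) (z : Step α Act S) :
    .lm z.term y ⋍ .se (sigS sigF y) ((mergeLeftStep sigF y z).elim .delta Step.term) := by
  refine .trans (lm_term_eq hy z) ?_
  obtain ⟨φ, a, _ | x'⟩ := z
  · refine se_of_not_eqBot fun hb => ?_
    simp only [mergeLeftStep, if_neg hb, Option.elim]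
    exact .refl _
  · by_cases hb : EqBot (sigS sigF (.par x' y))
    · simp only [mergeLeftStep, if_pos hb, Option.elim]
      exact .seC (.refl _) (gc_seq_of_eqBot hactdelta hb φ a)
    · simp only [mergeLeftStep, if_neg hb, Option.elim]
      exact .refl _

theorem lm_term_of_par_comm (hactdelta : ∀ s, actF none s = none)
    (hx : .encap Set.univ x ⋍ .se (sigS sigF x) .delta) (z : Step α Act S)
    (hcomm : ∀ y' ∈ z.2.2, SPT.par y' x ⋍ .par x y') :
    .lm z.term x ⋍ .se (sigS sigF x) ((mergeRightStep sigF x z).elim .delta Step.term) := by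
  refine .trans (lm_term_eq hx z) ?_
  obtain ⟨ψ, b, _ | y'⟩ := z
  · refine se_of_not_eqBot fun hb => ?_
    simp only [mergeRightStep, if_neg hb, Option.elim]
    exact .refl _
  · have hc := hcomm y' rfl
    by_cases hb : EqBot (sigS sigF (.par x y'))
    · simp only [mergeRightStep, if_pos hb, Option.elim]
      exact .seC (.refl _)
        (.trans (.gcC (.refl ψ) (.seqC (.refl _) hc)) (gc_seq_of_eqBot hactdelta hb ψ b))
    · simp only [mergeRightStep, if_neg hb, Option.elim]
      exact .seC (.refl _) (.gcC (.refl ψ) (.seqC (.refl _) hc))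

theorem term_cm_term_comm (hγcomm : ∀ a b, γ a b = γ b a) {z₁ z₂ : Step α Act S}
    (hcomm : ∀ x' ∈ z₁.2.2, ∀ y' ∈ z₂.2.2, SPT.par x' y' ⋍ .par y' x') :
    .cm z₁.term z₂.term ⋍ .cm z₂.term z₁.term :=
  .trans (term_cm_term z₁ z₂) (.trans (gc_fequiv (FEquiv.conj_comm _ _)
    (prefixed_cm_comm hγcomm _ _ hcomm)) (.symm (term_cm_term z₂ z₁)))

theorem cm_term (hactdelta : ∀ s, actF none s = none) (z₁ z₂ : Step α Act S) :
    .cm z₁.term z₂.term ⋍ (commStep γ sigF (z₁, z₂)).elim .delta Step.term := by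
  obtain ⟨φ, a, o₁⟩ := z₁
  obtain ⟨ψ, b, o₂⟩ := z₂
  refine .trans (term_cm_term _ _) (.trans (.gcC (.refl _) (prefixed_cm_prefixed a b o₁ o₂)) ?_)
  rcases hc : γ (some a) (some b) with _ | c
  · simp only [commStep, hc, Option.elim]
    refine .trans (.gcC (.refl _) ?_) (.GC3 _)
    cases commTarget o₁ o₂
    exacts [.refl _, .A7 _]
  by_cases hφψ : EqBot (φ.conj ψ)
  · simp only [commStep, hc, hφψ, not_true, false_and, if_false, Option.elim]
    exact gc_eqBot hφψ _
  by_cases ht : ∀ x' ∈ o₁, ∀ y' ∈ o₂, ¬ EqBot (sigS sigF (.par x' y'))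
  · simp only [commStep, hc]
    rw [if_pos ⟨hφψ, ht⟩]
    exact .refl _
  · push Not at ht
    obtain ⟨x', rfl, y', rfl, hb⟩ := ht
    simp only [commStep, hc, Option.mem_def, Option.some.injEq, forall_eq', hb, not_true,
      and_false, if_false, Option.elim, commTarget]
    exact gc_seq_of_eqBot hactdelta hb _ c

theorem st_term (hactdelta : ∀ s, actF none s = none) (s : S) (z : Step α Act S) :
    .st s z.term ⋍ .se (sigF s) ((stStep actF effF sigF s z).elim .delta Step.term) := by
  obtain ⟨φ, a, o⟩ := z
  have hpre : SPT.st s (prefixed a o) ⋍ .se (sigF s) (o.elim (actd (actF (some a) s))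
      fun x' => .seq (actd (actF (some a) s)) (.st (effF (some a) s) x')) := by
    cases o with
    | none => exact .SO1 (some a) s
    | some x' => exact .SO2 (some a) s x'
  refine .trans (.SO4 _ _ _) (.trans (.seC (.refl _) (.trans (.gcC (.refl φ) hpre) (.SE8 _ _ _)))
    (.trans (se_se_of_fequiv (FEquiv.conj_imp_self _ _) _) (.seC (.refl _) ?_)))
  rcases ha : actF (some a) s with _ | a' <;> rcases o with _ | x' <;>
    simp only [stStep, ha, Option.elim]
  · exact .GC3 φ
  · exact .trans (.gcC (.refl φ) (.A7 _)) (.GC3 φ)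
  · exact .refl _
  · by_cases hb : EqBot (sigS sigF (.st (effF (some a) s) x'))
    · rw [if_pos hb]
      exact gc_seq_of_eqBot hactdelta hb φ a'
    · rw [if_neg hb]
      exact .refl _

end

/-! ### Head normal forms -/

theorem act_eq_hnf (a : Act) : .act a ⋍ hnf (.act a) :=
  .trans (.symm (.SE1 _)) (.seC (.refl _) (.trans (.symm (.GC1 _)) (.symm (.A6 _))))

theorem encap_eq_hnf (H : Set Act) (hx : x ⋍ hnf x) : .encap H x ⋍ hnf (.encap H x) := by
  refine .trans (.encapC H hx) (.trans (.SE12 _ _ _) (.seC (.refl _) ?_))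
  refine .trans (encap_sumL _ _) ?_
  rw [List.map_map]
  exact sumL_map_filterMap fun z _ => encap_term H z

variable [Fintype α]

theorem alt_eq_hnf (hx : x ⋍ hnf x) (hy : y ⋍ hnf y) : .alt x y ⋍ hnf (.alt x y) := by
  refine .trans (.altC hx hy) (.trans (se_alt_se _ _ _ _) (se_of_not_eqBot fun hb => ?_))
  simp only [SPT.steps, sigS, hb, if_false, List.map_append]
  exact .seC (.refl _) (.symm (sumL_append _ _))

theorem seq_eq_hnf (hactdelta : ∀ s, actF none s = none) (hx : x ⋍ hnf x) (y : SPT α Act S) :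
    .seq x y ⋍ hnf (.seq x y) := by
  refine .trans (.seqC hx (.refl y)) (.trans (.SE5 _ _ _) (.seC (.refl _) ?_))
  refine .trans (seq_sumL _ _) ?_
  rw [List.map_map]
  exact sumL_map_filterMap fun z _ => seq_term hactdelta y z

theorem gc_eq_hnf (ψ : Fml α) (hx : x ⋍ hnf x) : .gc ψ x ⋍ hnf (.gc ψ x) := by
  refine .trans (.gcC (.refl ψ) hx) (.trans (.SE8 _ _ _) (.seC (.refl _) ?_))
  refine .trans (gc_sumL _ _) ?_
  rw [List.map_map]
  exact sumL_map_filterMap fun z _ => gc_term ψ z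

theorem se_eq_hnf (ψ : Fml α) (hx : x ⋍ hnf x) : .se ψ x ⋍ hnf (.se ψ x) := by
  refine .trans (.seC (.refl ψ) hx) (.trans (.SE6 _ _ _) (se_of_not_eqBot fun hb => ?_))
  simp only [SPT.steps, sigS, hb, if_false]
  exact .refl _

theorem st_eq_hnf (hactdelta : ∀ s, actF none s = none) (s : S) (hx : x ⋍ hnf x) :
    .st s x ⋍ hnf (.st s x) := by
  refine .trans (.stC s hx) (.trans (.SO5 _ _ _) (.trans (.seC (.refl _) (st_sumL hactdelta s _))
    (.trans (.seC (.refl _) (alt_se_delta _ _)) (.trans (.SE6 _ _ _)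
      (se_of_not_eqBot fun hb => ?_)))))
  simp only [SPT.steps, sigS, hb, if_false, List.map_map]
  exact se_sumL_map_filterMap (FEquiv.conj_conj_right _ _) fun z _ => st_term hactdelta s z

theorem lm_eq_se_sumL_filterMap (hx : x ⋍ hnf x) (hy : y ⋍ hnf y)
    {g : Step α Act S → Option (Step α Act S)}
    (hg : ∀ z ∈ SPT.steps γ actF effF sigF x,
      .lm z.term y ⋍ .se (sigS sigF y) ((g z).elim .delta Step.term)) :
    .lm x y ⋍ .se ((sigS sigF x).conj (sigS sigF y))
      (sumL (((SPT.steps γ actF effF sigF x).filterMap g).map Step.term)) := by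
  refine .trans (.lmC hx (.refl y))
    (.trans (.SE9 _ _ _) (.trans (.seC (.refl _) (lm_sumL _ y)) ?_))
  refine .trans (.seC (.refl _) (.trans (.altC (.refl _) (encap_univ_of_eq_hnf hy))
    (alt_se_delta _ _))) (.trans (.SE6 _ _ _) ?_)
  rw [List.map_map]
  exact se_sumL_map_filterMap (FEquiv.conj_conj_right _ _) hg

theorem cm_eq_se_sumL_filterMap (hactdelta : ∀ s, actF none s = none)
    (hγcomm : ∀ a b, γ a b = γ b a) (hγdelta : ∀ a, γ none a = none)
    (hx : x ⋍ hnf x) (hy : y ⋍ hnf y) :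
    .cm x y ⋍ .se ((sigS sigF x).conj (sigS sigF y))
      (sumL (((SPT.steps γ actF effF sigF x ×ˢ SPT.steps γ actF effF sigF y).filterMap
        (commStep γ sigF)).map Step.term)) :=
  .trans (cm_eq_se_sumL hγcomm hγdelta hx hy)
    (.seC (.refl _) (sumL_map_filterMap fun z _ => cm_term hactdelta z.1 z.2))

theorem lm_eq_hnf (hactdelta : ∀ s, actF none s = none) (hx : x ⋍ hnf x) (hy : y ⋍ hnf y) :
    .lm x y ⋍ hnf (.lm x y) := by
  refine .trans (lm_eq_se_sumL_filterMap hx hy fun z _ =>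
    lm_term hactdelta (encap_univ_of_eq_hnf hy) z) (se_of_not_eqBot fun hb => ?_)
  simp only [SPT.steps, sigS, hb, if_false]
  exact .refl _

theorem cm_eq_hnf (hactdelta : ∀ s, actF none s = none)
    (hγcomm : ∀ a b, γ a b = γ b a) (hγdelta : ∀ a, γ none a = none)
    (hx : x ⋍ hnf x) (hy : y ⋍ hnf y) : .cm x y ⋍ hnf (.cm x y) := by
  refine .trans (cm_eq_se_sumL_filterMap hactdelta hγcomm hγdelta hx hy)
    (se_of_not_eqBot fun hb => ?_)
  simp only [SPT.steps, sigS, hb, if_false]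
  exact .refl _

theorem par_eq_hnf (hactdelta : ∀ s, actF none s = none)
    (hγcomm : ∀ a b, γ a b = γ b a) (hγdelta : ∀ a, γ none a = none)
    (hx : x ⋍ hnf x) (hy : y ⋍ hnf y)
    (hcomm : ∀ z ∈ SPT.steps γ actF effF sigF y, ∀ y' ∈ z.2.2, SPT.par y' x ⋍ .par x y') :
    .par x y ⋍ hnf (.par x y) := by
  have hl := lm_eq_se_sumL_filterMap hx hy fun z _ =>
    lm_term hactdelta (encap_univ_of_eq_hnf hy) z
  have hr := lm_eq_se_sumL_filterMap hy hx fun z hz =>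
    lm_term_of_par_comm hactdelta (encap_univ_of_eq_hnf hx) z (hcomm z hz)
  have hc := cm_eq_se_sumL_filterMap hactdelta hγcomm hγdelta hx hy
  refine .trans (.CM1 x y) (.trans (.altC (.altC hl (.trans hr
    (se_fequiv (FEquiv.conj_comm _ _) (.refl _)))) hc) (.trans (.altC (se_alt_se_self _ _ _)
    (.refl _)) (.trans (se_alt_se_self _ _ _) (se_of_not_eqBot fun hb => ?_))))
  simp only [SPT.steps, sigS, hb, if_false, List.map_append]
  exact .seC (.refl _) (.symm (.trans (sumL_append _ _) (.altC (sumL_append _ _) (.refl _))))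

theorem par_comm_of_eq_hnf (hγcomm : ∀ a b, γ a b = γ b a) (hγdelta : ∀ a, γ none a = none)
    (hx : x ⋍ hnf x) (hy : y ⋍ hnf y)
    (hcomm : ∀ z₁ ∈ SPT.steps γ actF effF sigF x, ∀ z₂ ∈ SPT.steps γ actF effF sigF y,
      ∀ x' ∈ z₁.2.2, ∀ y' ∈ z₂.2.2, SPT.par x' y' ⋍ .par y' x') :
    .par x y ⋍ .par y x := by
  have hcm : SPT.cm x y ⋍ .cm y x := by
    refine .trans (cm_eq_se_sumL hγcomm hγdelta hx hy) (.trans (se_fequiv (FEquiv.conj_comm _ _)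
      (sumL_congr ?_ ?_)) (.symm (cm_eq_se_sumL hγcomm hγdelta hy hx)))
    · intro t ht
      obtain ⟨⟨z₁, z₂⟩, hz, rfl⟩ := List.mem_map.mp ht
      obtain ⟨hz₁, hz₂⟩ := List.mem_product.mp hz
      exact .inr ⟨_, List.mem_map.mpr ⟨(z₂, z₁), List.mem_product.mpr ⟨hz₂, hz₁⟩, rfl⟩,
        term_cm_term_comm hγcomm (hcomm z₁ hz₁ z₂ hz₂)⟩
    · intro t ht
      obtain ⟨⟨z₂, z₁⟩, hz, rfl⟩ := List.mem_map.mp ht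
      obtain ⟨hz₂, hz₁⟩ := List.mem_product.mp hz
      exact .inr ⟨_, List.mem_map.mpr ⟨(z₁, z₂), List.mem_product.mpr ⟨hz₁, hz₂⟩, rfl⟩,
        .symm (term_cm_term_comm hγcomm (hcomm z₁ hz₁ z₂ hz₂))⟩
  exact .trans (.CM1 x y) (.trans (.altC (.A1 _ _) hcm) (.symm (.CM1 y x)))

/-- Head normalisation and commutativity of `∥` have to be proved together: the summands of
`x ∥ y` contributed by `y` reach `x ∥ y'` only up to commutativity, and commutativity of `|`
needs the head normal forms of its operands. -/
theorem eq_hnf_and_par_comm (hγcomm : ∀ a b, γ a b = γ b a) (hγdelta : ∀ a, γ none a = none)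
    (hactdelta : ∀ s, actF none s = none) (n : ℕ) :
    (∀ p : SPT α Act S, sizeOf p < n → p ⋍ hnf p) ∧
      ∀ x y : SPT α Act S, sizeOf (SPT.par x y) < n → .par x y ⋍ .par y x := by
  induction n with
  | zero => exact ⟨fun _ h => (Nat.not_lt_zero _ h).elim, fun _ _ h => (Nat.not_lt_zero _ h).elim⟩
  | succ n ih =>
    obtain ⟨ihp, ihc⟩ := ih
    have target_lt {p : SPT α Act S} {z} (hz : z ∈ SPT.steps γ actF effF sigF p) :
        ∀ t ∈ z.2.2, sizeOf t < sizeOf p := (STr_of_mem_steps hz).sizeOf_lt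
    refine ⟨fun p hp => ?_, fun x y hxy => ?_⟩
    · have small (t : SPT α Act S) (ht : sizeOf t < sizeOf p) : t ⋍ hnf t := ihp t (by omega)
      cases p with
      | act a => exact act_eq_hnf a
      | delta => exact .symm (.SE1 _)
      | nex => exact .symm (.SE2 _)
      | alt x y =>
        exact alt_eq_hnf (small x (by decreasing_trivial)) (small y (by decreasing_trivial))
      | seq x y => exact seq_eq_hnf hactdelta (small x (by decreasing_trivial)) y
      | gc ψ x => exact gc_eq_hnf ψ (small x (by decreasing_trivial))
      | se ψ x => exact se_eq_hnf ψ (small x (by decreasing_trivial))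
      | par x y =>
        refine par_eq_hnf hactdelta hγcomm hγdelta (small x (by decreasing_trivial))
          (small y (by decreasing_trivial)) fun z hz y' hy' => ihc y' x ?_
        have := target_lt hz y' hy'
        simp only [SPT.par.sizeOf_spec] at hp ⊢
        omega
      | lm x y =>
        exact lm_eq_hnf hactdelta (small x (by decreasing_trivial)) (small y (by decreasing_trivial))
      | cm x y =>
        exact cm_eq_hnf hactdelta hγcomm hγdelta (small x (by decreasing_trivial))
          (small y (by decreasing_trivial))
      | encap H x => exact encap_eq_hnf H (small x (by decreasing_trivial))
      | st s x => exact st_eq_hnf hactdelta s (small x (by decreasing_trivial))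
    · simp only [SPT.par.sizeOf_spec] at hxy
      refine par_comm_of_eq_hnf hγcomm hγdelta (ihp x (by omega)) (ihp y (by omega))
        fun z₁ hz₁ z₂ hz₂ x' hx' y' hy' => ihc x' y' ?_
      have := target_lt hz₁ x' hx'
      have := target_lt hz₂ y' hy'
      simp only [SPT.par.sizeOf_spec]
      omega

theorem eq_hnf (hγcomm : ∀ a b, γ a b = γ b a) (hγdelta : ∀ a, γ none a = none)
    (hactdelta : ∀ s, actF none s = none) (p : SPT α Act S) : p ⋍ hnf p :=
  (eq_hnf_and_par_comm hγcomm hγdelta hactdelta (sizeOf p + 1)).1 p (Nat.lt_succ_self _)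

/-! ### Splitting guards over valuations -/

theorem gc_eq_sumL_charFml (φ : Fml α) (x : SPT α Act S) :
    .gc φ x ⋍ sumL (worlds.map fun σ => .gc ((charFml σ).conj φ) x) := by
  refine .trans (gc_fequiv (FEquiv.disjList_charFml φ) (.refl x)) (.trans (gc_disjList _ x) ?_)
  rw [List.map_map]
  exact .refl _

theorem eq_se_sumL_atoms (hγcomm : ∀ a b, γ a b = γ b a) (hγdelta : ∀ a, γ none a = none)
    (hactdelta : ∀ s, actF none s = none) (p : SPT α Act S) :
    p ⋍ .se (sigS sigF p) (sumL (atoms γ actF effF sigF p)) := by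
  refine .trans (eq_hnf hγcomm hγdelta hactdelta p) (.trans (.symm (.SE7 _ _)) (.seC (.refl _) ?_))
  refine .trans (gc_sumL _ _) ?_
  rw [List.map_map]
  exact sumL_map_flatMap fun z _ => .trans (.GC6 _ _ _) (gc_eq_sumL_charFml _ _)

theorem _root_.SSim.atoms_match {R : SPT α Act S → SPT α Act S → Prop} {p q : SPT α Act S}
    (hsim : SSim γ actF effF sigF R p q)
    (hR : ∀ {φ a p' ψ b q'}, STr γ actF effF sigF p φ a (some p') →
      STr γ actF effF sigF q ψ b (some q') → R p' q' → p' ⋍ q') :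
    ∀ t ∈ atoms γ actF effF sigF p, t ⋍ .delta ∨ ∃ t' ∈ atoms γ actF effF sigF q, t ⋍ t' := by
  obtain ⟨hstep, hsig⟩ := hsim
  intro t ht
  obtain ⟨⟨φ, a, o⟩, hz, ht⟩ := List.mem_flatMap.mp ht
  obtain ⟨σ, -, rfl⟩ := List.mem_map.mp ht
  by_cases hf : eval σ ((sigS sigF p).conj φ) = .f
  · refine .inl (gc_eqBot (fun τ => ?_) _)
    by_cases hτ : τ = σ
    · subst hτ
      simp only [eval, eval_charFml, if_true] at hf ⊢
      rw [hf]
      rfl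
    · simp only [eval, eval_charFml, hτ, if_false, conjT]
  have hp : eval σ (sigS sigF p) ≠ .f := fun h => hf (by simp only [eval, h, conjT])
  have hφ : eval σ φ ≠ .f := fun h =>
    hf (by simp only [eval, h]; cases eval σ (sigS sigF p) <;> rfl)
  have hpz := STr_of_mem_steps hz
  obtain ⟨ψ, o', hψ, hqz, ho⟩ := hstep φ a o hpz σ hp hφ
  refine .inr ⟨_, List.mem_flatMap.mpr
    ⟨(ψ, a, o'), hqz.mem_steps, List.mem_map.mpr ⟨σ, mem_worlds σ, rfl⟩⟩, ?_⟩
  refine gc_fequiv (FEquiv.charFml_conj (by simp only [eval, hsig σ, hψ])) ?_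
  rcases o with _ | p' <;> rcases o' with _ | q' <;> simp only [SOptR] at ho
  · exact .refl _
  · exact .seqC (.refl _) (hR hpz hqz ho)

end SDeriv

theorem ctACPpsSO_completeness_general {α Act S : Type} [Fintype α]
    (γ : Option Act → Option Act → Option Act)
    (hγcomm : ∀ a b, γ a b = γ b a)
    (hγdelta : ∀ a, γ none a = none)
    (actF : Option Act → S → Option Act) (effF : Option Act → S → S)
    (sigF : S → Fml α)
    (hactdelta : ∀ s, actF none s = none)
    (p q : SPT α Act S) (h : SBisim γ actF effF sigF p q) :
    SDeriv γ actF effF sigF p q := by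
  induction hn : sizeOf p + sizeOf q using Nat.strong_induction_on generalizing p q with
  | _ n ih =>
    obtain ⟨R, hR, hpq⟩ := h
    have targets {φ a p' ψ b q'} (hp : STr γ actF effF sigF p φ a (some p'))
        (hq : STr γ actF effF sigF q ψ b (some q')) (hr : R p' q') :
        SDeriv γ actF effF sigF p' q' := by
      have := hp.sizeOf_lt p' rfl
      have := hq.sizeOf_lt q' rfl
      exact ih _ (by omega) p' q' ⟨R, hR, hr⟩ rfl
    obtain ⟨hfwd, hbwd⟩ := hR p q hpq
    have hsums := SDeriv.sumL_congr (hfwd.atoms_match targets)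
      (hbwd.atoms_match fun hq hp hr => .symm (targets hp hq hr))
    exact .trans (SDeriv.eq_se_sumL_atoms hγcomm hγdelta hactdelta p)
      (.trans (SDeriv.se_fequiv hfwd.2 hsums)
        (.symm (SDeriv.eq_se_sumL_atoms hγcomm hγdelta hactdelta q)))

/-- Completeness of ctACPps+SO with respect to bisimulation equivalence. -/
theorem ctACPpsSO_completeness {α Act S : Type} [Fintype α] [Fintype Act]
    (γ : Option Act → Option Act → Option Act)
    (hγcomm : ∀ a b, γ a b = γ b a)
    (hγassoc : ∀ a b c, γ (γ a b) c = γ a (γ b c))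
    (hγdelta : ∀ a, γ none a = none)
    (actF : Option Act → S → Option Act) (effF : Option Act → S → S)
    (sigF : S → Fml α)
    (hactdelta : ∀ s, actF none s = none)
    (p q : SPT α Act S) (h : SBisim γ actF effF sigF p q) :
    SDeriv γ actF effF sigF p q :=
  ctACPpsSO_completeness_general γ hγcomm hγdelta actF effF sigF hactdelta p q h
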